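/- arXiv:2510.04163 — 3 statements merged into one kernel-verified Lean document; each statement's English description precedes it below -/
import Mathlib

section
/- Let M be a matroid of rank r on a finite ground set E, let H be a stressed hyperplane of M with |H| ≥ r, and let M̃ be the relaxation of M at H. Suppose White's conjecture in degree 2 holds for M̃, and suppose the degree-2 part of condition (*) holds for M: any two pairs of bases of M that are connected by an exchange sequence of length 2 in M̃ can be connected by an exchange sequence in M. Then White's conjecture in degree 2 holds for M, i.e., any two pairs of bases of M with the same multiset union are connected by an exchange sequence in M. -/
open Set

namespace WhitePaving

variable {α : Type*}

/-- A single symmetric exchange step between two `n`-tuples of bases of the matroid `N`: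
the tuples agree except in two positions `i ≠ j`, where `B i` is replaced by
`(B i \ {a}) ∪ {b}` and `B j` by `(B j \ {b}) ∪ {a}` for some `a ∈ B i \ B j` and
`b ∈ B j \ B i`, both resulting sets being bases of `N`. -/
def ExchStep (N : Matroid α) {n : ℕ} (B B' : Fin n → Set α) : Prop :=
  ∃ i j : Fin n, i ≠ j ∧ ∃ a b : α,
    a ∈ B i \ B j ∧ b ∈ B j \ B i ∧
    B' i = (B i \ {a}) ∪ {b} ∧ B' j = (B j \ {b}) ∪ {a} ∧
    N.IsBase (B' i) ∧ N.IsBase (B' j) ∧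
    ∀ k : Fin n, k ≠ i → k ≠ j → B' k = B k

/-- `seq` is an exchange sequence (of length `ℓ`) of `n`-tuples in the matroid `N`:
each tuple is obtained from the previous one by a symmetric exchange step. -/
def IsExchSeq (N : Matroid α) {n ℓ : ℕ} (seq : Fin (ℓ + 1) → Fin n → Set α) : Prop :=
  ∀ t : Fin ℓ, ExchStep N (seq t.castSucc) (seq t.succ)

/-- Two `n`-tuples are connected by some exchange sequence in `N`. -/
def ExchConnected (N : Matroid α) {n : ℕ} (B B' : Fin n → Set α) : Prop :=
  ∃ (ℓ : ℕ) (seq : Fin (ℓ + 1) → Fin n → Set α),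
    seq 0 = B ∧ seq (Fin.last ℓ) = B' ∧ IsExchSeq N seq

/-- Two `n`-tuples of sets have the same multiset union: each element appears in the
same number of coordinates of both. -/
def SameUnion {n : ℕ} (B B' : Fin n → Set α) : Prop :=
  ∀ e : α, Nat.card {i : Fin n // e ∈ B i} = Nat.card {i : Fin n // e ∈ B' i}

/-- White's conjecture in degree `n` for the matroid `N`: any two `n`-tuples of bases of `N`
with the same multiset union are connected by an exchange sequence in `N`. -/
def WhiteDeg (N : Matroid α) (n : ℕ) : Prop :=
  ∀ B B' : Fin n → Set α, (∀ i, N.IsBase (B i)) → (∀ i, N.IsBase (B' i)) →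
    SameUnion B B' → ExchConnected N B B'

/-- White's conjecture for the matroid `N`. -/
def White (N : Matroid α) : Prop := ∀ n : ℕ, 1 ≤ n → WhiteDeg N n

/-- `C` is a circuit of `M`: a minimal dependent subset of the ground set. -/
def IsCircuitP (M : Matroid α) (C : Set α) : Prop :=
  C ⊆ M.E ∧ ¬ M.Indep C ∧ ∀ x ∈ C, M.Indep (C \ {x})

/-- `M` has rank `r`: every base of `M` has exactly `r` elements. -/
def HasRank (M : Matroid α) (r : ℕ) : Prop :=
  ∀ B, M.IsBase B → B.ncard = r

/-- `M` is paving: every circuit of `M` has size `r` or `r + 1`, where `r` is the rank. -/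
def IsPavingP (M : Matroid α) : Prop :=
  ∀ C B, IsCircuitP M C → M.IsBase B → C.ncard = B.ncard ∨ C.ncard = B.ncard + 1

/-- `H` is a hyperplane of `M`: a maximal proper flat. -/
def IsHyperplaneP (M : Matroid α) (H : Set α) : Prop :=
  M.IsFlat H ∧ H ≠ M.E ∧ ∀ F, M.IsFlat F → H ⊂ F → F = M.E

/-- A hyperplane `H` of a rank-`r` matroid is stressed if every `r`-element
subset of `H` is a circuit. -/
def IsStressedP (M : Matroid α) (r : ℕ) (H : Set α) : Prop :=
  IsHyperplaneP M H ∧ ∀ S ⊆ H, S.ncard = r → IsCircuitP M S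

/-- `Mt` is the relaxation of the rank-`r` matroid `M` at the stressed hyperplane `H`:
a matroid on the same ground set whose bases are the bases of `M` together with the
`r`-element subsets of `H`. -/
def IsRelaxation (M Mt : Matroid α) (r : ℕ) (H : Set α) : Prop :=
  Mt.E = M.E ∧ ∀ B : Set α, (Mt.IsBase B ↔ (M.IsBase B ∨ (B ⊆ H ∧ B.ncard = r)))

/-- Deletion of the set `D` from the matroid `M`. -/
def deleteP (M : Matroid α) (D : Set α) : Matroid α := Matroid.restrict M (M.E \ D)

/-- Contraction of the set `C` in the matroid `M`. -/
def contractP (M : Matroid α) (C : Set α) : Matroid α :=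
  Matroid.dual (deleteP (Matroid.dual M) C)


def NChain (N : Matroid α) {n : ℕ} (ℓ : ℕ) (g : ℕ → Fin n → Set α) : Prop :=
  ∀ t, t < ℓ → ExchStep N (g t) (g (t + 1))

lemma exchConnected_of_nchain {N : Matroid α} {n ℓ : ℕ} {g : ℕ → Fin n → Set α}
    (h : NChain N ℓ g) : ExchConnected N (g 0) (g ℓ) := by
  refine ⟨ℓ, fun t => g t.1, by simp, rfl, fun t => h t.1 t.isLt⟩

lemma nchain_of_exchConnected {N : Matroid α} {n : ℕ} {B B' : Fin n → Set α}
    (h : ExchConnected N B B') : ∃ ℓ g, NChain N ℓ g ∧ g 0 = B ∧ g ℓ = B' := by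
  obtain ⟨ℓ, seq, h0, hl, hseq⟩ := h
  refine ⟨ℓ, fun t => seq ⟨min t ℓ, by omega⟩, fun t ht => ?_, ?_, ?_⟩
  · show ExchStep N (seq ⟨min t ℓ, by omega⟩) (seq ⟨min (t+1) ℓ, by omega⟩)
    have e1 : (⟨min t ℓ, by omega⟩ : Fin (ℓ+1)) = Fin.castSucc ⟨t, ht⟩ :=
      Fin.ext (by simp [Nat.min_eq_left ht.le])
    have e2 : (⟨min (t+1) ℓ, by omega⟩ : Fin (ℓ+1)) = Fin.succ ⟨t, ht⟩ :=
      Fin.ext (by simp [Nat.min_eq_left ht])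
    rw [e1, e2]
    exact hseq ⟨t, ht⟩
  · show seq ⟨min 0 ℓ, by omega⟩ = B
    rw [show (⟨min 0 ℓ, by omega⟩ : Fin (ℓ+1)) = 0 from Fin.ext (by simp)]
    exact h0
  · show seq ⟨min ℓ ℓ, by omega⟩ = B'
    rw [show (⟨min ℓ ℓ, by omega⟩ : Fin (ℓ+1)) = Fin.last ℓ from Fin.ext (by simp)]
    exact hl

lemma exchConnected_refl {N : Matroid α} {n : ℕ} (B : Fin n → Set α) : ExchConnected N B B :=
  ⟨0, fun _ => B, rfl, rfl, fun t => t.elim0⟩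

lemma ExchConnected.head {N : Matroid α} {n : ℕ} {B C D : Fin n → Set α}
    (hstep : ExchStep N B C) (h : ExchConnected N C D) : ExchConnected N B D := by
  obtain ⟨ℓ, g, hc, h0, hl⟩ := nchain_of_exchConnected h
  have key : NChain N (ℓ+1) (fun t => if t = 0 then B else g (t-1)) := by
    intro t ht
    rcases Nat.eq_zero_or_pos t with rfl | htpos
    · simpa [h0] using hstep
    · have h1 : t ≠ 0 := htpos.ne'
      have h2 : t + 1 ≠ 0 := by omega
      simpa [h1, h2, show t - 1 + 1 = t from by omega] using hc (t-1) (by omega)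
  have h2 := exchConnected_of_nchain key
  simpa [show ℓ + 1 ≠ 0 from by omega, hl] using h2

lemma ExchConnected.trans {N : Matroid α} {n : ℕ} {B C D : Fin n → Set α}
    (h1 : ExchConnected N B C) (h2 : ExchConnected N C D) : ExchConnected N B D := by
  obtain ⟨ℓ1, g1, hc1, h10, h1l⟩ := nchain_of_exchConnected h1
  obtain ⟨ℓ2, g2, hc2, h20, h2l⟩ := nchain_of_exchConnected h2
  have key : NChain N (ℓ1 + ℓ2) (fun t => if t ≤ ℓ1 then g1 t else g2 (t - ℓ1)) := by
    intro t ht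
    by_cases h : t + 1 ≤ ℓ1
    · simp only [if_pos (by omega : t ≤ ℓ1), if_pos h]
      exact hc1 t (by omega)
    · by_cases h' : t ≤ ℓ1
      · have he : t = ℓ1 := by omega
        subst he
        simp only [if_pos le_rfl, if_neg h, show t + 1 - t = 1 from by omega]
        rw [h1l, ← h20]
        exact hc2 0 (by omega)
      · simp only [if_neg h', if_neg (by omega : ¬ t + 1 ≤ ℓ1),
          show t + 1 - ℓ1 = (t - ℓ1) + 1 from by omega]
        exact hc2 (t - ℓ1) (by omega)
  have h3 := exchConnected_of_nchain key
  simp only [if_pos (Nat.zero_le ℓ1), h10] at h3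
  by_cases hz : ℓ2 = 0
  · subst hz
    simp only [Nat.add_zero, if_pos le_rfl, h1l] at h3
    rw [← h20, h2l] at h3
    exact h3
  · rw [if_neg (by omega), show ℓ1 + ℓ2 - ℓ1 = ℓ2 from by omega, h2l] at h3
    exact h3


/-! step normalization -/

def SStep (N : Matroid α) (P Q P' Q' : Set α) : Prop :=
  ∃ a b : α, a ∈ P \ Q ∧ b ∈ Q \ P ∧ P' = P \ {a} ∪ {b} ∧ Q' = Q \ {b} ∪ {a} ∧
    N.IsBase P' ∧ N.IsBase Q'

lemma SStep.symm {N : Matroid α} {P Q P' Q' : Set α} (h : SStep N P Q P' Q') :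
    SStep N Q P Q' P' := by
  obtain ⟨a, b, ha, hb, h1, h2, hP', hQ'⟩ := h
  exact ⟨b, a, hb, ha, h2, h1, hQ', hP'⟩

lemma exchStep_iff_sstep {N : Matroid α} {B B' : Fin 2 → Set α} :
    ExchStep N B B' ↔ SStep N (B 0) (B 1) (B' 0) (B' 1) := by
  constructor
  · rintro ⟨i, j, hij, a, b, ha, hb, h1, h2, hP', hQ', -⟩
    fin_cases i <;> fin_cases j
    · exact absurd rfl hij
    · exact ⟨a, b, ha, hb, h1, h2, hP', hQ'⟩
    · exact SStep.symm ⟨a, b, ha, hb, h1, h2, hP', hQ'⟩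
    · exact absurd rfl hij
  · rintro ⟨a, b, ha, hb, h1, h2, hP', hQ'⟩
    refine ⟨0, 1, by decide, a, b, ha, hb, h1, h2, hP', hQ', ?_⟩
    intro k hk0 hk1
    fin_cases k
    · exact absurd rfl hk0
    · exact absurd rfl hk1

lemma step_M_of_good {M Mt : Matroid α} {n : ℕ} {B B' : Fin n → Set α}
    (hstep : ExchStep Mt B B') (h' : ∀ i, M.IsBase (B' i)) : ExchStep M B B' := by
  obtain ⟨i, j, hij, a, b, ha, hb, e1, e2, -, -, hk⟩ := hstep
  exact ⟨i, j, hij, a, b, ha, hb, e1, e2, h' i, h' j, hk⟩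

/-! matroid helpers -/

section Helpers

variable {M Mt : Matroid α} {r : ℕ} {H : Set α}

lemma mt_base (hrel : IsRelaxation M Mt r H) {B : Set α} (h : M.IsBase B) : Mt.IsBase B :=
  (hrel.2 B).2 (Or.inl h)

lemma base_of_mt_base (hrel : IsRelaxation M Mt r H) {B : Set α} (h : Mt.IsBase B)
    (hn : ¬ B ⊆ H) : M.IsBase B :=
  ((hrel.2 B).1 h).resolve_right (fun h' => hn h'.1)

lemma bad_coord (hrel : IsRelaxation M Mt r H) {A : Set α} (hb : Mt.IsBase A)
    (hnb : ¬ M.IsBase A) : A ⊆ H ∧ A.ncard = r :=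
  ((hrel.2 A).1 hb).resolve_left hnb

lemma dep_of_subset_H (hH : IsStressedP M r H) {S : Set α} (hS : S ⊆ H)
    (hcard : S.ncard = r) : ¬ M.Indep S :=
  (hH.2 S hS hcard).2.1

lemma base_not_subset_H (hr : HasRank M r) (hH : IsStressedP M r H) {B : Set α}
    (hB : M.IsBase B) : ¬ B ⊆ H :=
  fun h => dep_of_subset_H hH h (hr B hB) hB.indep

lemma indep_base_of_ncard (hfin : M.E.Finite) (hr : HasRank M r) {I : Set α}
    (hI : M.Indep I) (hc : I.ncard = r) : M.IsBase I := by
  obtain ⟨B, hB, hIB⟩ := hI.exists_isBase_superset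
  have hBfin : B.Finite := hfin.subset hB.subset_ground
  have : I = B := Set.eq_of_subset_of_ncard_le hIB (by rw [hr B hB, hc]) hBfin
  rwa [this]

lemma exch_ncard {P : Set α} {a b : α} (hfin : P.Finite) (ha : a ∈ P) (hb : b ∉ P) :
    (P \ {a} ∪ {b}).ncard = P.ncard := by
  have h1 : b ∉ P \ {a} := fun h => hb h.1
  rw [Set.union_singleton, Set.ncard_insert_of_notMem h1 (hfin.diff),
      Set.ncard_diff_singleton_of_mem ha]
  have : 0 < P.ncard := (Set.ncard_pos hfin).2 ⟨a, ha⟩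
  omega

lemma not_ground_subset_closure (hfin : M.E.Finite) (hr : HasRank M r) {I : Set α}
    (hI : M.Indep I) (hc : I.ncard < r) : ¬ M.E ⊆ M.closure I := by
  intro hsub
  obtain ⟨B, hB, hIB⟩ := hI.exists_isBase_superset
  have hBfin := hfin.subset hB.subset_ground
  have hne : ¬ B ⊆ I := by
    intro h
    have := Set.ncard_le_ncard h (hfin.subset hI.subset_ground)
    rw [hr B hB] at this
    omega
  obtain ⟨x, hxB, hxI⟩ := not_subset.1 hne
  have hx : x ∈ M.closure (B \ {x}) :=
    M.closure_subset_closure (subset_diff_singleton hIB hxI) (hsub (hB.subset_ground hxB))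
  exact hB.indep.notMem_closure_diff_of_mem hxB hx

lemma closure_subset_H (hH : IsStressedP M r H) {I : Set α} (hI : I ⊆ H) :
    M.closure I ⊆ H := by
  have h1 : M.closure I ⊆ M.closure H := M.closure_subset_closure hI
  rwa [hH.1.1.closure] at h1

lemma mem_closure_of_dep_insert {I : Set α} {e : α} (hI : M.Indep I) (he : e ∈ M.E)
    (heI : e ∉ I) (hdep : ¬ M.Indep (insert e I)) : e ∈ M.closure I := by
  by_contra h
  exact hdep ((hI.insert_indep_iff_of_notMem heI).2 ⟨he, h⟩)

lemma not_indep_insert_of_mem_closure {I : Set α} {e : α}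
    (he : e ∈ M.closure I) (heI : e ∉ I) : ¬ M.Indep (insert e I) := by
  intro h
  have hI : M.Indep I := h.subset (subset_insert _ _)
  exact ((hI.insert_indep_iff_of_notMem heI).1 h).2 he

lemma insert_base (hfin : M.E.Finite) (hr : HasRank M r) {I : Set α} {y : α}
    (hI : M.Indep I) (hy : y ∈ M.E) (hycl : y ∉ M.closure I)
    (hc : I.ncard = r - 1) (hr0 : 0 < r) : M.IsBase (insert y I) := by
  have hyI : y ∉ I := fun h => hycl (M.subset_closure I hI.subset_ground h)
  have hind : M.Indep (insert y I) := (hI.insert_indep_iff_of_notMem hyI).2 ⟨hy, hycl⟩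
  apply indep_base_of_ncard hfin hr hind
  rw [Set.ncard_insert_of_notMem hyI (hfin.subset hI.subset_ground)]
  omega

end Helpers


/-! set identities -/

section SetIds
variable {P Q : Set α} {a1 a2 b1 b2 y : α}

lemma sid1 (ha1 : a1 ∈ P) (hb1 : b1 ∉ P) :
    ((P \ {a1} ∪ {b1}) \ {b1}) ∪ {a1} = P := by
  ext x
  by_cases h1 : x = a1 <;> by_cases h2 : x = b1 <;>
    simp_all [Set.mem_union, Set.mem_diff, Set.mem_singleton_iff]

lemma sid2 (ha1 : a1 ∈ P) (hb1 : b1 ∉ P) (h12 : a1 ≠ a2) (h2b : a2 ≠ b1) :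
    ((P \ {a1} ∪ {b1}) \ {a2}) ∪ {a1} = P \ {a2} ∪ {b1} := by
  ext x
  by_cases h1 : x = a1 <;> by_cases h2 : x = a2 <;> by_cases h3 : x = b1 <;>
    simp_all [Set.mem_union, Set.mem_diff, Set.mem_singleton_iff]

lemma sid3 (ha1 : a1 ∉ Q) (h1b : a1 ≠ b1) :
    ((Q \ {b1} ∪ {a1}) \ {a1}) ∪ {a2} = Q \ {b1} ∪ {a2} := by
  ext x
  by_cases h1 : x = a1 <;> by_cases h2 : x = a2 <;> by_cases h3 : x = b1 <;>
    simp_all [Set.mem_union, Set.mem_diff, Set.mem_singleton_iff]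

lemma sid4 (hya : y ≠ a2) :
    insert a2 ((Q \ {y}) ∩ (Q \ {b1})) = (Q \ {b1} ∪ {a2}) \ {y} := by
  ext x
  by_cases h1 : x = a2 <;> by_cases h2 : x = y <;> by_cases h3 : x = b1 <;>
    simp_all [Set.mem_union, Set.mem_diff, Set.mem_singleton_iff, Set.mem_insert_iff,
      Set.mem_inter_iff]

lemma sid5 (hyb : y ≠ b1) : Q \ {y} ∪ (Q \ {b1}) = Q := by
  ext x
  by_cases h1 : x = y <;> by_cases h2 : x = b1 <;>
    simp_all [Set.mem_union, Set.mem_diff, Set.mem_singleton_iff]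

lemma sid6 (hy : y ∈ Q) (hyb : y ≠ b1) (hab : a2 ≠ b1) (hya : y ≠ a2) :
    ((Q \ {y} ∪ {a2}) \ {b1}) ∪ {y} = Q \ {b1} ∪ {a2} := by
  ext x
  by_cases h1 : x = y <;> by_cases h2 : x = a2 <;> by_cases h3 : x = b1 <;>
    simp_all [Set.mem_union, Set.mem_diff, Set.mem_singleton_iff]

lemma sid9 (hb1 : b1 ∈ Q) (h21 : b2 ≠ b1) (h2a : b2 ≠ a1) (ha1 : a1 ∉ Q) :
    ((Q \ {b1} ∪ {a1}) \ {b2}) ∪ {b1} = Q \ {b2} ∪ {a1} := by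
  ext x
  by_cases h1 : x = b1 <;> by_cases h2 : x = b2 <;> by_cases h3 : x = a1 <;>
    simp_all [Set.mem_union, Set.mem_diff, Set.mem_singleton_iff]

lemma sid10 (hy : y ∈ Q) (h2y : b2 ≠ y) (h12 : a1 ≠ b2) :
    ((Q \ {y} ∪ {a1}) \ {b2}) ∪ {y} = Q \ {b2} ∪ {a1} := by
  ext x
  by_cases h1 : x = y <;> by_cases h2 : x = b2 <;> by_cases h3 : x = a1 <;>
    simp_all [Set.mem_union, Set.mem_diff, Set.mem_singleton_iff]

lemma sid11 (ha1 : a1 ∈ P) (h12 : a1 ≠ a2) (h2b : a2 ≠ b1) :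
    insert a1 ((P \ {a1} ∪ {b1}) \ {a2}) = P \ {a2} ∪ {b1} := by
  ext x
  by_cases h1 : x = a1 <;> by_cases h2 : x = a2 <;> by_cases h3 : x = b1 <;>
    simp_all [Set.mem_union, Set.mem_diff, Set.mem_singleton_iff, Set.mem_insert_iff]

lemma sid12 (ha1 : a1 ∈ P) (hb1 : b1 ∉ P) (h12 : a1 ≠ a2) (h1b1 : a1 ≠ b1)
    (h1b2 : a1 ≠ b2) (h21 : b2 ≠ b1) :
    insert a1 ((((P \ {a1} ∪ {b1}) \ {a2}) ∪ {b2}) \ {b1}) = P \ {a2} ∪ {b2} := by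
  ext x
  by_cases h1 : x = a1 <;> by_cases h2 : x = a2 <;> by_cases h3 : x = b1 <;>
    by_cases h4 : x = b2 <;>
    simp_all [Set.mem_union, Set.mem_diff, Set.mem_singleton_iff, Set.mem_insert_iff]

lemma sid13 (hb2 : b2 ∈ Q) (h21 : b2 ≠ b1) :
    insert b2 (insert a2 ((Q \ {b1}) \ {b2})) = Q \ {b1} ∪ {a2} := by
  ext x
  by_cases h1 : x = b2 <;> by_cases h2 : x = a2 <;> by_cases h3 : x = b1 <;>
    simp_all [Set.mem_union, Set.mem_diff, Set.mem_singleton_iff, Set.mem_insert_iff]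

lemma sid14 (hb1 : b1 ∈ Q) (h21 : b2 ≠ b1) :
    insert b1 (insert a2 ((Q \ {b1}) \ {b2})) = Q \ {b2} ∪ {a2} := by
  ext x
  by_cases h1 : x = b1 <;> by_cases h2 : x = a2 <;> by_cases h3 : x = b2 <;>
    simp_all [Set.mem_union, Set.mem_diff, Set.mem_singleton_iff, Set.mem_insert_iff]

lemma sid16 (h2b : a2 ≠ b1) (h1b : a1 ≠ b1) :
    ((P \ {a1} ∪ {b1}) \ {a2}) ∪ {b2} = ((P \ {a2} ∪ {b1}) \ {a1}) ∪ {b2} := by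
  ext x
  by_cases h1 : x = a1 <;> by_cases h2 : x = a2 <;> by_cases h3 : x = b1 <;>
    by_cases h4 : x = b2 <;>
    simp_all [Set.mem_union, Set.mem_diff, Set.mem_singleton_iff]

lemma sid17 (h1b : a1 ≠ b2) (h2b : a2 ≠ b2) :
    ((Q \ {b1} ∪ {a1}) \ {b2}) ∪ {a2} = ((Q \ {b1} ∪ {a2}) \ {b2}) ∪ {a1} := by
  ext x
  by_cases h1 : x = a1 <;> by_cases h2 : x = a2 <;> by_cases h3 : x = b1 <;>
    by_cases h4 : x = b2 <;>
    simp_all [Set.mem_union, Set.mem_diff, Set.mem_singleton_iff]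

lemma sid18 (h2b : a2 ≠ b1) (hb2a : b2 ≠ a1) :
    ((P \ {a1} ∪ {b1}) \ {a2}) ∪ {b2} = ((P \ {a2} ∪ {b2}) \ {a1}) ∪ {b1} := by
  ext x
  by_cases h1 : x = a1 <;> by_cases h2 : x = a2 <;> by_cases h3 : x = b1 <;>
    by_cases h4 : x = b2 <;>
    simp_all [Set.mem_union, Set.mem_diff, Set.mem_singleton_iff]

lemma sid19 (h1b : a1 ≠ b2) (h2b : a2 ≠ b1) :
    ((Q \ {b1} ∪ {a1}) \ {b2}) ∪ {a2} = ((Q \ {b2} ∪ {a2}) \ {b1}) ∪ {a1} := by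
  ext x
  by_cases h1 : x = a1 <;> by_cases h2 : x = a2 <;> by_cases h3 : x = b1 <;>
    by_cases h4 : x = b2 <;>
    simp_all [Set.mem_union, Set.mem_diff, Set.mem_singleton_iff]

end SetIds


/-! core lemma: a bad middle tuple between a good tuple and a bad tuple can be
made good -/

lemma lemA_sets {M Mt : Matroid α} {r : ℕ} {H : Set α}
    (hfin : M.E.Finite) (hr : HasRank M r) (hH : IsStressedP M r H)
    (hrel : IsRelaxation M Mt r H)
    {P Q P1 Q1 P2 Q2 : Set α}
    (hP : M.IsBase P) (hQ : M.IsBase Q)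
    (s1 : SStep Mt P Q P1 Q1) (hP1H : P1 ⊆ H)
    (s2 : SStep Mt P1 Q1 P2 Q2) (hbad2 : P2 ⊆ H ∨ Q2 ⊆ H) :
    ∃ X Y, M.IsBase X ∧ M.IsBase Y ∧ SStep Mt P Q X Y ∧ SStep Mt X Y P2 Q2 := by
  obtain ⟨a1, b1, ⟨ha1P, ha1Q⟩, ⟨hb1Q, hb1P⟩, hP1e, hQ1e, hP1b, hQ1b⟩ := s1
  obtain ⟨a2, b2, ⟨ha2P1, ha2Q1⟩, ⟨hb2Q1, hb2P1⟩, hP2e, hQ2e, hP2b, hQ2b⟩ := s2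
  have hHE : H ⊆ M.E := hH.1.1.subset_ground
  have hPE := hP.subset_ground
  have hQE := hQ.subset_ground
  have hPfin : P.Finite := hfin.subset hPE
  have hQfin : Q.Finite := hfin.subset hQE
  have hPr : P.ncard = r := hr P hP
  have hQr : Q.ncard = r := hr Q hQ
  have hrpos : 0 < r := hPr ▸ (Set.ncard_pos hPfin).2 ⟨a1, ha1P⟩
  have ha1b1 : a1 ≠ b1 := fun h => hb1P (h ▸ ha1P)
  have hPd : P \ {a1} ⊆ H := fun x hx => hP1H (by rw [hP1e]; exact Or.inl hx)
  have hb1H : b1 ∈ H := hP1H (by rw [hP1e]; exact Or.inr rfl)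
  have ha1H : a1 ∉ H := by
    intro h
    refine base_not_subset_H hr hH hP (fun x hx => ?_)
    by_cases hxa : x = a1
    · exact hxa ▸ h
    · exact hPd ⟨hx, hxa⟩
  have ha1P1 : a1 ∉ P1 := by
    rw [hP1e]; rintro (⟨-, h⟩ | h)
    · exact h rfl
    · exact ha1b1 h
  have ha1Q1 : a1 ∈ Q1 := by rw [hQ1e]; exact Or.inr rfl
  have ha2H : a2 ∈ H := hP1H ha2P1
  have ha2a1 : a2 ≠ a1 := fun h => ha1P1 (h ▸ ha2P1)
  have hQ1base : M.IsBase Q1 := base_of_mt_base hrel hQ1b (fun h => ha1H (h ha1Q1))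
  have hP1fin : P1.Finite := hfin.subset (fun x hx => hHE (hP1H hx))
  have hP1r : P1.ncard = r := by rw [hP1e, exch_ncard hPfin ha1P hb1P, hPr]
  by_cases hb2a1 : b2 = a1
  · -- CASE ii : the bad side switches; net effect is a single exchange
    rw [hb2a1] at hP2e hQ2e
    have ha2b1 : a2 ≠ b1 := by
      intro h
      subst h
      have hP2P : P2 = P := by rw [hP2e, hP1e]; exact sid1 ha1P hb1P
      have hQ2Q : Q2 = Q := by rw [hQ2e, hQ1e]; exact sid1 hb1Q ha1Q
      rcases hbad2 with h | h
      · exact base_not_subset_H hr hH hP (hP2P ▸ h)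
      · exact base_not_subset_H hr hH hQ (hQ2Q ▸ h)
    have ha2P : a2 ∈ P := by
      have h := ha2P1; rw [hP1e] at h
      rcases h with ⟨h, -⟩ | h
      · exact h
      · exact absurd h ha2b1
    have ha2Q : a2 ∉ Q := by
      intro h
      exact ha2Q1 (by rw [hQ1e]; exact Or.inl ⟨h, ha2b1⟩)
    have hP2c : P2 = P \ {a2} ∪ {b1} := by
      rw [hP2e, hP1e]; exact sid2 ha1P hb1P ha2a1.symm ha2b1
    have hQ2c : Q2 = Q \ {b1} ∪ {a2} := by
      rw [hQ2e, hQ1e]; exact sid3 ha1Q ha1b1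
    have ha1P2 : a1 ∈ P2 := by rw [hP2c]; exact Or.inl ⟨ha1P, ha2a1.symm⟩
    have hQ2H : Q2 ⊆ H := by
      rcases hbad2 with h | h
      · exact absurd (h ha1P2) ha1H
      · exact h
    have hQ2r : Q2.ncard = r := by rw [hQ2c, exch_ncard hQfin hb1Q ha2Q, hQr]
    have hQ2circ : IsCircuitP M Q2 := hH.2 Q2 hQ2H hQ2r
    have hPa2indep : M.Indep (P \ {a2}) := hP.indep.subset diff_subset
    have hPa2E : P \ {a2} ⊆ M.E := fun x hx => hPE hx.1
    have hexists : ¬ (Q \ {b1} ⊆ M.closure (P \ {a2})) := by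
      intro hsub
      have ha1F : a1 ∈ M.closure (P \ {a2}) :=
        M.subset_closure _ hPa2E ⟨ha1P, ha2a1.symm⟩
      have hQ1F : Q1 ⊆ M.closure (P \ {a2}) := by
        rw [hQ1e]; rintro x (hx | rfl)
        · exact hsub hx
        · exact ha1F
      have hE : M.E ⊆ M.closure (P \ {a2}) := by
        have h1 : M.closure Q1 ⊆ M.closure (M.closure (P \ {a2})) :=
          M.closure_subset_closure hQ1F
        rwa [M.closure_closure, hQ1base.closure_eq] at h1
      refine not_ground_subset_closure hfin hr hPa2indep ?_ hE
      rw [Set.ncard_diff_singleton_of_mem ha2P, hPr]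
      omega
    obtain ⟨y, hyQb1, hyF⟩ := not_subset.1 hexists
    obtain ⟨hyQ, hyb1⟩ : y ∈ Q ∧ y ≠ b1 := ⟨hyQb1.1, hyQb1.2⟩
    have hya2 : y ≠ a2 := fun hh => ha2Q (hh ▸ hyQ)
    have hyP : y ∉ P := by
      intro h
      exact hyF (M.subset_closure _ hPa2E ⟨h, hya2⟩)
    have hXbase : M.IsBase (P \ {a2} ∪ {y}) := by
      rw [Set.union_singleton]
      refine insert_base hfin hr hPa2indep (hQE hyQ) hyF ?_ hrpos
      rw [Set.ncard_diff_singleton_of_mem ha2P, hPr]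
    have hYbase : M.IsBase (Q \ {y} ∪ {a2}) := by
      have hQy_indep : M.Indep (Q \ {y}) := hQ.indep.subset diff_subset
      have hYindep : M.Indep (Q \ {y} ∪ {a2}) := by
        rw [Set.union_singleton]
        by_contra hdep
        have h1 : a2 ∈ M.closure (Q \ {y}) :=
          mem_closure_of_dep_insert hQy_indep (hHE ha2H) (fun h => ha2Q h.1) hdep
        have hQb1_indep : M.Indep (Q \ {b1}) := hQ.indep.subset diff_subset
        have h2 : a2 ∈ M.closure (Q \ {b1}) := by
          refine mem_closure_of_dep_insert hQb1_indep (hHE ha2H) (fun h => ha2Q h.1) ?_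
          rw [show insert a2 (Q \ {b1}) = Q2 from by rw [hQ2c, Set.union_singleton]]
          exact hQ2circ.2.1
        have hmod : M.closure ((Q \ {y}) ∩ (Q \ {b1})) =
            M.closure (Q \ {y}) ∩ M.closure (Q \ {b1}) := by
          refine Matroid.Indep.closure_inter_eq_inter_closure ?_
          rw [sid5 hyb1]
          exact hQ.indep
        have h3 : a2 ∈ M.closure ((Q \ {y}) ∩ (Q \ {b1})) := by
          rw [hmod]; exact ⟨h1, h2⟩
        have h6 : M.Indep (Q2 \ {y}) :=
          hQ2circ.2.2 y (by rw [hQ2c]; exact Or.inl ⟨hyQ, hyb1⟩)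
        refine not_indep_insert_of_mem_closure h3 (fun h => ha2Q h.1.1) ?_
        rw [sid4 hya2, ← hQ2c]
        exact h6
      exact indep_base_of_ncard hfin hr hYindep (by rw [exch_ncard hQfin hyQ ha2Q, hQr])
    refine ⟨P \ {a2} ∪ {y}, Q \ {y} ∪ {a2}, hXbase, hYbase,
      ⟨a2, y, ⟨ha2P, ha2Q⟩, ⟨hyQ, hyP⟩, rfl, rfl, mt_base hrel hXbase, mt_base hrel hYbase⟩, ?_⟩
    refine ⟨y, b1, ⟨Or.inr rfl, ?_⟩, ⟨?_, ?_⟩, ?_, ?_, hP2b, hQ2b⟩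
    · rintro (⟨-, h⟩ | h)
      · exact h rfl
      · exact hya2 h
    · exact Or.inl ⟨hb1Q, fun h => hyb1 h.symm⟩
    · rintro (⟨h, -⟩ | h)
      · exact hb1P h
      · exact hyb1 h.symm
    · have hXy : (P \ {a2} ∪ {y}) \ {y} = P \ {a2} := by
        rw [Set.union_singleton, Set.insert_diff_self_of_notMem (fun h => hyP h.1)]
      rw [hP2c, hXy]
    · rw [hQ2c]
      exact (sid6 hyQ hyb1 ha2b1 hya2).symm
  · -- CASE i : the bad side stays on the P side
    have hb2Q : b2 ∈ Q := by
      have h := hb2Q1; rw [hQ1e] at h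
      rcases h with ⟨h, -⟩ | h
      · exact h
      · exact absurd h hb2a1
    have hb1P1 : b1 ∈ P1 := by rw [hP1e]; exact Or.inr rfl
    have hb2b1 : b2 ≠ b1 := fun h => hb2P1 (h ▸ hb1P1)
    have hb2P : b2 ∉ P := by
      intro h
      refine hb2P1 ?_
      rw [hP1e]
      exact Or.inl ⟨h, hb2a1⟩
    have ha1Q2 : a1 ∈ Q2 := by
      rw [hQ2e]; exact Or.inl ⟨ha1Q1, fun h => hb2a1 h.symm⟩
    have hP2H : P2 ⊆ H := hbad2.resolve_right (fun h => ha1H (h ha1Q2))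
    have hQ2base : M.IsBase Q2 := base_of_mt_base hrel hQ2b (fun h => ha1H (h ha1Q2))
    have hb2H : b2 ∈ H := hP2H (by rw [hP2e]; exact Or.inr rfl)
    by_cases ha2b1 : a2 = b1
    · -- CASE i-a : net effect is a single exchange (a1 out, b2 in)
      rw [ha2b1] at hP2e hQ2e
      have hP2c : P2 = P \ {a1} ∪ {b2} := by
        rw [hP2e, hP1e]
        rw [show (P \ {a1} ∪ {b1}) \ {b1} = P \ {a1} from by
          rw [Set.union_singleton, Set.insert_diff_self_of_notMem (fun h => hb1P h.1)]]
      have hQ2c : Q2 = Q \ {b2} ∪ {a1} := by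
        rw [hQ2e, hQ1e]; exact sid9 hb1Q hb2b1 hb2a1 ha1Q
      have hQH_indep : M.Indep (insert a1 (Q ∩ H)) := by
        have h0 : M.Indep (Q ∩ H) := hQ.indep.subset Set.inter_subset_left
        refine (h0.insert_indep_iff_of_notMem (fun h => ha1H h.2)).2
          ⟨hPE ha1P, fun hcl => ha1H (closure_subset_H hH Set.inter_subset_right hcl)⟩
      obtain ⟨Bs, hBs, hIBs, hBsU⟩ := hQH_indep.exists_isBase_subset_union_isBase hQ
      have ha1Bs : a1 ∈ Bs := hIBs (Set.mem_insert _ _)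
      have hBsQ : Bs ⊆ insert a1 Q := by
        intro x hx
        rcases hBsU hx with h | h
        · rcases h with rfl | h
          · exact Set.mem_insert _ _
          · exact Set.mem_insert_of_mem _ h.1
        · exact Set.mem_insert_of_mem _ h
      have hBsfin := hfin.subset hBs.subset_ground
      have hyex : ∃ y ∈ Q, y ∉ Bs := by
        by_contra h
        push_neg at h
        have hsub : insert a1 Q ⊆ Bs := Set.insert_subset ha1Bs h
        have hc := Set.ncard_le_ncard hsub hBsfin
        rw [Set.ncard_insert_of_notMem ha1Q hQfin, hQr, hr Bs hBs] at hc
        omega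
      obtain ⟨y, hyQ, hyBs⟩ := hyex
      have hyH : y ∉ H := fun h => hyBs (hIBs (Set.mem_insert_of_mem _ ⟨hyQ, h⟩))
      have hya1 : y ≠ a1 := fun h => ha1Q (h ▸ hyQ)
      have hBseq : Bs = Q \ {y} ∪ {a1} := by
        have hsub : Bs ⊆ insert a1 (Q \ {y}) := by
          intro x hx
          rcases hBsQ hx with rfl | h
          · exact Set.mem_insert _ _
          · exact Set.mem_insert_of_mem _ ⟨h, fun he => hyBs (he ▸ hx)⟩
        have hc : (insert a1 (Q \ {y})).ncard ≤ Bs.ncard := by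
          rw [hr Bs hBs, Set.ncard_insert_of_notMem (fun h => ha1Q h.1) (hQfin.diff),
              Set.ncard_diff_singleton_of_mem hyQ, hQr]
          omega
        rw [Set.union_singleton]
        exact Set.eq_of_subset_of_ncard_le hsub hc ((hQfin.diff).insert a1)
      have hYbase : M.IsBase (Q \ {y} ∪ {a1}) := hBseq ▸ hBs
      have hPa1_indep : M.Indep (P \ {a1}) := hP.indep.subset diff_subset
      have hXbase : M.IsBase (P \ {a1} ∪ {y}) := by
        rw [Set.union_singleton]
        refine insert_base hfin hr hPa1_indep (hQE hyQ)
          (fun h => hyH (closure_subset_H hH hPd h)) ?_ hrpos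
        rw [Set.ncard_diff_singleton_of_mem ha1P, hPr]
      have hyP : y ∉ P := fun h => hyH (hPd ⟨h, hya1⟩)
      have hb2y : b2 ≠ y := fun h => hyH (h ▸ hb2H)
      refine ⟨P \ {a1} ∪ {y}, Q \ {y} ∪ {a1}, hXbase, hYbase,
        ⟨a1, y, ⟨ha1P, ha1Q⟩, ⟨hyQ, hyP⟩, rfl, rfl, mt_base hrel hXbase, mt_base hrel hYbase⟩, ?_⟩
      refine ⟨y, b2, ⟨Or.inr rfl, ?_⟩, ⟨Or.inl ⟨hb2Q, hb2y⟩, ?_⟩, ?_, ?_, hP2b, hQ2b⟩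
      · rintro (⟨-, h⟩ | h)
        · exact h rfl
        · exact hya1 h
      · rintro (⟨h, -⟩ | h)
        · exact hb2P h
        · exact hb2y h
      · have hXy : (P \ {a1} ∪ {y}) \ {y} = P \ {a1} := by
          rw [Set.union_singleton, Set.insert_diff_self_of_notMem (fun h => hyP h.1)]
        rw [hP2c, hXy]
      · rw [hQ2c]
        exact (sid10 hyQ hb2y (fun h => hb2a1 h.symm)).symm
    · -- CASE i-b : generic position, one of two alternative middles works
      have ha2P : a2 ∈ P := by
        have h := ha2P1; rw [hP1e] at h
        rcases h with ⟨h, -⟩ | h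
        · exact h
        · exact absurd h ha2b1
      have ha2Q : a2 ∉ Q := fun h => ha2Q1 (by rw [hQ1e]; exact Or.inl ⟨h, ha2b1⟩)
      have ha2b2 : a2 ≠ b2 := fun h => hb2P1 (h ▸ ha2P1)
      have hP2r : P2.ncard = r := by
        rw [hP2e, exch_ncard hP1fin ha2P1 hb2P1, hP1r]
      have hP2circ : IsCircuitP M P2 := hH.2 P2 hP2H hP2r
      have hb1P2 : b1 ∈ P2 := by
        rw [hP2e]; exact Or.inl ⟨hb1P1, fun h => ha2b1 h.symm⟩
      have hb2P2 : b2 ∈ P2 := by rw [hP2e]; exact Or.inr rfl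
      have hP2fin : P2.Finite := hfin.subset (fun x hx => hHE (hP2H hx))
      -- S1 = P1 \ {a2}, indep as proper subset of the circuit P2
      have hS1eq : P2 \ {b2} = P1 \ {a2} := by
        rw [hP2e, Set.union_singleton, Set.insert_diff_self_of_notMem (fun h => hb2P1 h.1)]
      have hS1indep : M.Indep (P1 \ {a2}) := by
        rw [← hS1eq]; exact hP2circ.2.2 b2 hb2P2
      have hS1H : P1 \ {a2} ⊆ H := fun x hx => hP1H hx.1
      have hX1base : M.IsBase (P \ {a2} ∪ {b1}) := by
        rw [show P \ {a2} ∪ {b1} = insert a1 (P1 \ {a2}) from by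
          rw [hP1e]; exact (sid11 ha1P ha2a1.symm ha2b1).symm]
        refine insert_base hfin hr hS1indep (hPE ha1P)
          (fun h => ha1H (closure_subset_H hH hS1H h)) ?_ hrpos
        rw [Set.ncard_diff_singleton_of_mem ha2P1, hP1r]
      have hS2indep : M.Indep (P2 \ {b1}) := hP2circ.2.2 b1 hb1P2
      have hS2H : P2 \ {b1} ⊆ H := fun x hx => hP2H hx.1
      have hX2base : M.IsBase (P \ {a2} ∪ {b2}) := by
        rw [show P \ {a2} ∪ {b2} = insert a1 (P2 \ {b1}) from by
          rw [hP2e, hP1e]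
          exact (sid12 ha1P hb1P ha2a1.symm ha1b1 (fun h => hb2a1 h.symm) hb2b1).symm]
        refine insert_base hfin hr hS2indep (hPE ha1P)
          (fun h => ha1H (closure_subset_H hH hS2H h)) ?_ hrpos
        rw [Set.ncard_diff_singleton_of_mem hb1P2, hP2r]
      -- T and the two candidate Y's
      have hTQ2 : insert a2 ((Q \ {b1}) \ {b2}) ⊆ Q2 := by
        rintro x (rfl | ⟨⟨hxQ, hxb1⟩, hxb2⟩)
        · rw [hQ2e]; exact Or.inr rfl
        · rw [hQ2e, hQ1e]
          exact Or.inl ⟨Or.inl ⟨hxQ, hxb1⟩, hxb2⟩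
      have hTindep : M.Indep (insert a2 ((Q \ {b1}) \ {b2})) := hQ2base.indep.subset hTQ2
      have hr2 : 2 ≤ r := by
        have h2 : 1 < Q.ncard := (Set.one_lt_ncard hQfin).2 ⟨b1, hb1Q, b2, hb2Q, hb2b1.symm⟩
        omega
      have hTcard : (insert a2 ((Q \ {b1}) \ {b2})).ncard = r - 1 := by
        rw [Set.ncard_insert_of_notMem (fun h => ha2Q h.1.1) (hQfin.diff.diff),
            Set.ncard_diff_singleton_of_mem (show b2 ∈ Q \ {b1} from ⟨hb2Q, hb2b1⟩),
            Set.ncard_diff_singleton_of_mem hb1Q, hQr]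
        omega
      have hb2T : b2 ∉ insert a2 ((Q \ {b1}) \ {b2}) := by
        rintro (h | h)
        · exact ha2b2 h.symm
        · exact h.2 rfl
      have hb1T : b1 ∉ insert a2 ((Q \ {b1}) \ {b2}) := by
        rintro (h | h)
        · exact ha2b1 h.symm
        · exact h.1.2 rfl
      have hY : M.Indep (insert b2 (insert a2 ((Q \ {b1}) \ {b2}))) ∨
          M.Indep (insert b1 (insert a2 ((Q \ {b1}) \ {b2}))) := by
        by_contra h
        push_neg at h
        obtain ⟨h1, h2⟩ := h
        have hc1 : b2 ∈ M.closure (insert a2 ((Q \ {b1}) \ {b2})) :=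
          mem_closure_of_dep_insert hTindep (hQE hb2Q) hb2T h1
        have hc2 : b1 ∈ M.closure (insert a2 ((Q \ {b1}) \ {b2})) :=
          mem_closure_of_dep_insert hTindep (hQE hb1Q) hb1T h2
        have hQsub : Q ⊆ M.closure (insert a2 ((Q \ {b1}) \ {b2})) := by
          intro x hx
          by_cases hx1 : x = b1
          · exact hx1 ▸ hc2
          by_cases hx2 : x = b2
          · exact hx2 ▸ hc1
          exact M.subset_closure _ hTindep.subset_ground
            (Set.mem_insert_of_mem _ ⟨⟨hx, hx1⟩, hx2⟩)
        have hE : M.E ⊆ M.closure (insert a2 ((Q \ {b1}) \ {b2})) := by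
          have h3 := M.closure_subset_closure hQsub
          rwa [M.closure_closure, hQ.closure_eq] at h3
        refine not_ground_subset_closure hfin hr hTindep (by omega) hE
      rcases hY with hY1 | hY2
      · -- middle (P \ {a2} ∪ {b1}, Q \ {b1} ∪ {a2})
        have hY1indep : M.Indep (Q \ {b1} ∪ {a2}) := by
          rw [← sid13 hb2Q hb2b1]; exact hY1
        have hY1base : M.IsBase (Q \ {b1} ∪ {a2}) :=
          indep_base_of_ncard hfin hr hY1indep (by rw [exch_ncard hQfin hb1Q ha2Q, hQr])
        refine ⟨P \ {a2} ∪ {b1}, Q \ {b1} ∪ {a2}, hX1base, hY1base,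
          ⟨a2, b1, ⟨ha2P, ha2Q⟩, ⟨hb1Q, hb1P⟩, rfl, rfl,
            mt_base hrel hX1base, mt_base hrel hY1base⟩, ?_⟩
        refine ⟨a1, b2, ⟨Or.inl ⟨ha1P, ha2a1.symm⟩, ?_⟩,
          ⟨Or.inl ⟨hb2Q, hb2b1⟩, ?_⟩, ?_, ?_, hP2b, hQ2b⟩
        · rintro (⟨h, -⟩ | h)
          · exact ha1Q h
          · exact ha2a1 h.symm
        · rintro (⟨h, -⟩ | h)
          · exact hb2P h
          · exact hb2b1 h
        · rw [hP2e, hP1e]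
          exact sid16 ha2b1 ha1b1
        · rw [hQ2e, hQ1e]
          exact sid17 (fun h => hb2a1 h.symm) ha2b2
      · -- middle (P \ {a2} ∪ {b2}, Q \ {b2} ∪ {a2})
        have hY2indep : M.Indep (Q \ {b2} ∪ {a2}) := by
          rw [← sid14 hb1Q hb2b1]; exact hY2
        have hY2base : M.IsBase (Q \ {b2} ∪ {a2}) :=
          indep_base_of_ncard hfin hr hY2indep (by rw [exch_ncard hQfin hb2Q ha2Q, hQr])
        refine ⟨P \ {a2} ∪ {b2}, Q \ {b2} ∪ {a2}, hX2base, hY2base,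
          ⟨a2, b2, ⟨ha2P, ha2Q⟩, ⟨hb2Q, hb2P⟩, rfl, rfl,
            mt_base hrel hX2base, mt_base hrel hY2base⟩, ?_⟩
        refine ⟨a1, b1, ⟨Or.inl ⟨ha1P, ha2a1.symm⟩, ?_⟩,
          ⟨Or.inl ⟨hb1Q, fun h => hb2b1 h.symm⟩, ?_⟩, ?_, ?_, hP2b, hQ2b⟩
        · rintro (⟨h, -⟩ | h)
          · exact ha1Q h
          · exact ha2a1 h.symm
        · rintro (⟨h, -⟩ | h)
          · exact hb1P h
          · exact hb2b1 h.symm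
        · rw [hP2e, hP1e]
          exact sid18 ha2b1 hb2a1
        · rw [hQ2e, hQ1e]
          exact sid19 (fun h => hb2a1 h.symm) ha2b1


/-! tuple version of the core lemma -/

lemma lemA_tuple {M Mt : Matroid α} {r : ℕ} {H : Set α}
    (hfin : M.E.Finite) (hr : HasRank M r) (hH : IsStressedP M r H)
    (hrel : IsRelaxation M Mt r H)
    {B0 B1 B2 : Fin 2 → Set α}
    (h0 : ∀ i, M.IsBase (B0 i)) (s1 : ExchStep Mt B0 B1) (s2 : ExchStep Mt B1 B2)
    (hb1 : ¬ ∀ i, M.IsBase (B1 i)) (hb2 : ¬ ∀ i, M.IsBase (B2 i)) :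
    ∃ X : Fin 2 → Set α, (∀ i, M.IsBase (X i)) ∧ ExchStep Mt B0 X ∧ ExchStep Mt X B2 := by
  rw [exchStep_iff_sstep] at s1 s2
  push_neg at hb1 hb2
  obtain ⟨i1, hi1⟩ := hb1
  obtain ⟨i2, hi2⟩ := hb2
  have hmt1 : ∀ i : Fin 2, Mt.IsBase (B1 i) := by
    obtain ⟨a, b, -, -, -, -, h1, h2⟩ := s1
    intro i
    fin_cases i <;> assumption
  have hmt2 : ∀ i : Fin 2, Mt.IsBase (B2 i) := by
    obtain ⟨a, b, -, -, -, -, h1, h2⟩ := s2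
    intro i
    fin_cases i <;> assumption
  have hbad2 : B2 0 ⊆ H ∨ B2 1 ⊆ H := by
    fin_cases i2
    · exact Or.inl (bad_coord hrel (hmt2 0) hi2).1
    · exact Or.inr (bad_coord hrel (hmt2 1) hi2).1
  fin_cases i1
  · have hP1H : B1 0 ⊆ H := (bad_coord hrel (hmt1 0) hi1).1
    obtain ⟨X, Y, hX, hY, t1, t2⟩ :=
      lemA_sets hfin hr hH hrel (h0 0) (h0 1) s1 hP1H s2 hbad2
    refine ⟨![X, Y], ?_, ?_, ?_⟩
    · intro i; fin_cases i <;> simpa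
    · rw [exchStep_iff_sstep]; simpa using t1
    · rw [exchStep_iff_sstep]; simpa using t2
  · have hP1H : B1 1 ⊆ H := (bad_coord hrel (hmt1 1) hi1).1
    obtain ⟨X, Y, hX, hY, t1, t2⟩ :=
      lemA_sets hfin hr hH hrel (h0 1) (h0 0) s1.symm hP1H s2.symm hbad2.symm
    refine ⟨![Y, X], ?_, ?_, ?_⟩
    · intro i; fin_cases i <;> simpa
    · rw [exchStep_iff_sstep]
      have := t1.symm
      simpa using this
    · rw [exchStep_iff_sstep]
      have := t2.symm
      simpa using this

/-! the engine -/

lemma engine {M Mt : Matroid α} {r : ℕ} {H : Set α}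
    (hfin : M.E.Finite) (hr : HasRank M r) (hH : IsStressedP M r H)
    (hrel : IsRelaxation M Mt r H)
    (hstar : ∀ B B' : Fin 2 → Set α,
      (∀ i, M.IsBase (B i)) → (∀ i, M.IsBase (B' i)) →
      (∃ seq : Fin (2 + 1) → Fin 2 → Set α,
        seq 0 = B ∧ seq (Fin.last 2) = B' ∧ IsExchSeq Mt seq) →
      ExchConnected M B B') :
    ∀ ℓ (g : ℕ → Fin 2 → Set α), NChain Mt ℓ g → (∀ i, M.IsBase (g 0 i)) →
      (∀ i, M.IsBase (g ℓ i)) → ExchConnected M (g 0) (g ℓ) := by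
  intro ℓ
  induction ℓ using Nat.strong_induction_on with
  | _ ℓ ih =>
    match ℓ with
    | 0 => exact fun g _ _ _ => exchConnected_refl (g 0)
    | 1 =>
      intro g hc h0 hl
      exact ExchConnected.head (step_M_of_good (hc 0 (by omega)) hl) (exchConnected_refl (g 1))
    | (k+2) =>
      intro g hc h0 hl
      by_cases hg1 : ∀ i, M.IsBase (g 1 i)
      · have hstep := step_M_of_good (hc 0 (by omega)) hg1
        have htail := ih (k+1) (by omega) (fun t => g (t+1))
          (fun t ht => hc (t+1) (by omega)) hg1 hl
        exact ExchConnected.head hstep htail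
      · by_cases hg2 : ∀ i, M.IsBase (g 2 i)
        · have hwin := hstar (g 0) (g 2) h0 hg2
            ⟨fun t => g t.1, rfl, rfl, fun t => hc t.1 (by omega)⟩
          have htail := ih k (by omega) (fun t => g (t+2))
            (fun t ht => hc (t+2) (by omega)) hg2 hl
          exact hwin.trans htail
        · obtain ⟨X, hX, t1, t2⟩ :=
            lemA_tuple hfin hr hH hrel h0 (hc 0 (by omega)) (hc 1 (by omega)) hg1 hg2
          have hstep := step_M_of_good t1 hX
          have hc' : NChain Mt (k+1) (fun t => if t = 0 then X else g (t+1)) := by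
            intro t ht
            rcases Nat.eq_zero_or_pos t with rfl | htpos
            · simpa using t2
            · simp only [if_neg htpos.ne', if_neg (by omega : ¬ t + 1 = 0)]
              exact hc (t+1) (by omega)
          have htail := ih (k+1) (by omega) _ hc'
            (by simpa using hX) (by simpa [show k+1 ≠ 0 from by omega] using hl)
          have htail' : ExchConnected M X (g (k+2)) := by
            simpa [show k+1 ≠ 0 from by omega] using htail
          exact ExchConnected.head hstep htail'


/-- Degree-2 case: if White's conjecture in degree 2 holds for the relaxation `Mt` of
`M` at a stressed hyperplane `H` with `|H| ≥ r`, and the degree-2 part of condition (*)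
holds for `M`, then White's conjecture in degree 2 holds for `M`. -/
theorem white_deg2_of_star (M Mt : Matroid α) (r : ℕ) (H : Set α)
    (hfin : M.E.Finite) (hr : HasRank M r) (hH : IsStressedP M r H)
    (hHcard : r ≤ H.ncard) (hrel : IsRelaxation M Mt r H)
    (hMt : WhiteDeg Mt 2)
    (hstar : ∀ B B' : Fin 2 → Set α,
      (∀ i, M.IsBase (B i)) → (∀ i, M.IsBase (B' i)) →
      (∃ seq : Fin (2 + 1) → Fin 2 → Set α,
        seq 0 = B ∧ seq (Fin.last 2) = B' ∧ IsExchSeq Mt seq) →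
      ExchConnected M B B') :
    WhiteDeg M 2 := by
  intro B B' hB hB' hsu
  have h1 : ∀ i, Mt.IsBase (B i) := fun i => mt_base hrel (hB i)
  have h2 : ∀ i, Mt.IsBase (B' i) := fun i => mt_base hrel (hB' i)
  obtain ⟨ℓ, g, hc, h0, hl⟩ := nchain_of_exchConnected (hMt B B' h1 h2 hsu)
  have hres := engine hfin hr hH hrel hstar ℓ g hc
    (by rw [h0]; exact hB) (by rw [hl]; exact hB')
  rwa [h0, hl] at hres


end WhitePaving
end

section
/- Let M be a paving matroid on a finite ground set E. Then any two pairs (X,Y) and (X',Y') of bases of M with X ⊎ Y = X' ⊎ Y' as multisets are connected by an exchange sequence in M. (White's conjecture in degree 2 holds for paving matroids.) -/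
open Set

namespace WhitePaving

variable {α : Type*}

section AuxWhite

variable {M : Matroid α}

def Step (M : Matroid α) (p q : Set α × Set α) : Prop :=
  ∃ a b : α, a ∈ p.1 \ p.2 ∧ b ∈ p.2 \ p.1 ∧
    q.1 = p.1 \ {a} ∪ {b} ∧ q.2 = p.2 \ {b} ∪ {a} ∧ M.IsBase q.1 ∧ M.IsBase q.2


lemma indep_of_small (hfin : M.E.Finite) (hpav : IsPavingP M) {Z : Set α}
    (hZ : M.IsBase Z) : ∀ n S, S.ncard = n → S ⊆ M.E → S.ncard < Z.ncard → M.Indep S := by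
  intro n
  induction n using Nat.strong_induction_on with
  | _ n IH =>
    intro S hn hSE hlt
    by_contra hdep
    by_cases hall : ∀ x ∈ S, M.Indep (S \ {x})
    · rcases hpav S Z ⟨hSE, hdep, hall⟩ hZ with h | h <;> omega
    · push_neg at hall
      obtain ⟨x, hxS, hx⟩ := hall
      have hfS : S.Finite := hfin.subset hSE
      have hcard : (S \ {x}).ncard < S.ncard := ncard_diff_singleton_lt_of_mem hxS hfS
      exact hx (IH _ (hn ▸ hcard) _ rfl (diff_subset.trans hSE) (by omega))


lemma base_of_indep_ncard (hfin : M.E.Finite) {Z S : Set α} (hZ : M.IsBase Z)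
    (hS : M.Indep S) (hcard : S.ncard = Z.ncard) : M.IsBase S := by
  obtain ⟨B, hB, hSB⟩ := hS.exists_isBase_superset
  have h : S = B := eq_of_subset_of_ncard_le hSB
    (by rw [hcard, hZ.ncard_eq_ncard_of_isBase hB]) (hfin.subset hB.subset_ground)
  rwa [h]


lemma not_indep_of_not_base (hfin : M.E.Finite) {Z S : Set α} (hZ : M.IsBase Z)
    (hSE : S ⊆ M.E) (hcard : S.ncard = Z.ncard) (h : ¬ M.IsBase S) : ¬ M.Indep S :=
  fun hI => h (base_of_indep_ncard hfin hZ hI hcard)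


lemma ncard_swap {s : Set α} {a b : α} (hs : s.Finite) (ha : a ∈ s) (hb : b ∉ s) :
    (s \ {a} ∪ {b}).ncard = s.ncard := by
  rw [union_singleton, ncard_exchange (by simp [hb]) ha]


lemma base_not_subset_closure_diff (hfin : M.E.Finite) {Z W : Set α} (hZ : M.IsBase Z)
    {x : α} (hx : x ∈ Z) (hW : M.IsBase W) (hsub : W ⊆ M.closure (Z \ {x})) : False := by
  have hZE := hZ.subset_ground
  have hind : M.Indep (Z \ {x}) := hZ.indep.subset diff_subset
  have hEsub : M.E ⊆ M.closure (Z \ {x}) := by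
    rw [← hW.closure_eq]
    exact M.closure_subset_closure_of_subset_closure hsub
  have hbase := hind.isBase_of_ground_subset_closure hEsub
  have h1 := hbase.ncard_eq_ncard_of_isBase hZ
  have hfZ := hfin.subset hZE
  have h2 : (Z \ {x}).ncard + 1 = Z.ncard := ncard_diff_singleton_add_one hx hfZ
  omega


lemma base_exchange_unique (hfin : M.E.Finite) (hpav : IsPavingP M) {Z : Set α}
    (hZ : M.IsBase Z) {z₁ z₂ c : α} (hz₁ : z₁ ∈ Z) (hz₂ : z₂ ∈ Z) (hne : z₁ ≠ z₂)
    (hcE : c ∈ M.E) (hcZ : c ∉ Z) (h1 : ¬ M.IsBase (Z \ {z₁} ∪ {c})) :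
    M.IsBase (Z \ {z₂} ∪ {c}) := by
  have hZE := hZ.subset_ground
  have hfZ := hfin.subset hZE
  have hr1 : 1 ≤ Z.ncard := by
    have := ncard_pos hfZ
    have : 0 < Z.ncard := this.mpr ⟨z₁, hz₁⟩
    omega
  by_contra h2
  -- both exchanged sets are dependent
  have hsub1 : Z \ {z₁} ∪ {c} ⊆ M.E := union_subset (diff_subset.trans hZE) (by simpa)
  have hsub2 : Z \ {z₂} ∪ {c} ⊆ M.E := union_subset (diff_subset.trans hZE) (by simpa)
  have hd1 := not_indep_of_not_base hfin hZ hsub1 (ncard_swap hfZ hz₁ hcZ) h1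
  have hd2 := not_indep_of_not_base hfin hZ hsub2 (ncard_swap hfZ hz₂ hcZ) h2
  set W : Set α := insert c (Z \ {z₁, z₂}) with hW
  have hWE : W ⊆ M.E := insert_subset hcE (diff_subset.trans hZE)
  have hWcard : W.ncard + 2 = Z.ncard + 1 := by
    have hp : ({z₁, z₂} : Set α) ⊆ Z := by
      intro e he; rcases he with rfl | he; exact hz₁; rw [mem_singleton_iff] at he; subst he; exact hz₂
    have h3 : (Z \ {z₁, z₂}).ncard = Z.ncard - 2 := by
      rw [ncard_diff hp ((hfZ.subset hp))]
      simp [ncard_pair hne]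
    have hr2 : 2 ≤ Z.ncard := by
      have := ncard_le_ncard hp hfZ
      simp [ncard_pair hne] at this; omega
    have hc' : c ∉ Z \ {z₁, z₂} := fun h => hcZ h.1
    rw [hW, ncard_insert_of_notMem hc' (hfZ.subset diff_subset)]
    omega
  have hWind : M.Indep W := indep_of_small hfin hpav hZ _ W rfl hWE (by omega)
  have hkey : ∀ z ∈ ({z₁, z₂} : Set α), z ∈ M.closure W := by
    intro z hz
    have hzZ : z ∈ Z := by rcases hz with rfl | hz; exact hz₁; rw [mem_singleton_iff] at hz; subst hz; exact hz₂
    have hzW : z ∉ W := by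
      intro h; rcases h with h | h
      · exact hcZ (h ▸ hzZ)
      · rcases hz with rfl | hz
        · exact h.2 (mem_insert _ _)
        · rw [mem_singleton_iff] at hz; subst hz; exact h.2 (mem_insert_of_mem _ rfl)
    rw [hWind.mem_closure_iff_of_notMem hzW]
    rcases hz with rfl | hz
    · have heq : insert z W = Z \ {z₂} ∪ {c} := by
        ext e
        simp only [hW, mem_insert_iff, mem_diff, mem_union, mem_singleton_iff]
        constructor
        · rintro (rfl | rfl | ⟨heZ, hne'⟩)
          · exact Or.inl ⟨hzZ, hne⟩
          · exact Or.inr rfl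
          · exact Or.inl ⟨heZ, fun h => hne' (Or.inr h)⟩
        · rintro (⟨heZ, hne'⟩ | rfl)
          · by_cases h : e = z; exact Or.inl h
            exact Or.inr (Or.inr ⟨heZ, by simp [h, hne']⟩)
          · exact Or.inr (Or.inl rfl)
      rw [heq]; exact ⟨hd2, hsub2⟩
    · rw [mem_singleton_iff] at hz; subst hz
      have heq : insert z W = Z \ {z₁} ∪ {c} := by
        ext e
        simp only [hW, mem_insert_iff, mem_diff, mem_union, mem_singleton_iff]
        constructor
        · rintro (rfl | rfl | ⟨heZ, hne'⟩)
          · exact Or.inl ⟨hzZ, Ne.symm hne⟩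
          · exact Or.inr rfl
          · exact Or.inl ⟨heZ, fun h => hne' (Or.inl h)⟩
        · rintro (⟨heZ, hne'⟩ | rfl)
          · by_cases h : e = z; exact Or.inl h
            exact Or.inr (Or.inr ⟨heZ, by simp [h, hne']⟩)
          · exact Or.inr (Or.inl rfl)
      rw [heq]; exact ⟨hd1, hsub1⟩
  have hZsub : Z ⊆ M.closure W := by
    intro z hz
    by_cases h : z = z₁ ∨ z = z₂
    · exact hkey z (by rcases h with h | h <;> simp [h])
    · push_neg at h
      exact M.subset_closure W hWE (mem_insert_of_mem _ ⟨hz, by simp [h.1, h.2]⟩)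
  have : M.E ⊆ M.closure W := by
    rw [← hZ.closure_eq]
    exact M.closure_subset_closure_of_subset_closure hZsub
  have := (hWind.isBase_of_ground_subset_closure this).ncard_eq_ncard_of_isBase hZ
  omega



lemma step_exchStep {M : Matroid α} {p q : Set α × Set α} (h : Step M p q) :
    ExchStep M ![p.1, p.2] ![q.1, q.2] := by
  obtain ⟨a, b, ha, hb, h1, h2, hB1, hB2⟩ := h
  refine ⟨0, 1, by decide, a, b, ?_, ?_, ?_, ?_, ?_, ?_, ?_⟩
  · simpa using ha
  · simpa using hb
  · simpa using h1
  · simpa using h2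
  · simpa using hB1
  · simpa using hB2
  · intro k h0 h1
    exfalso
    fin_cases k <;> simp_all


lemma rtg_exchConnected {M : Matroid α} {n : ℕ} {B B' : Fin n → Set α}
    (h : Relation.ReflTransGen (ExchStep M) B B') : ExchConnected M B B' := by
  induction h with
  | refl => exact ⟨0, fun _ => B, rfl, rfl, fun t => t.elim0⟩
  | tail hBC hstep ih =>
    obtain ⟨ℓ, seq, h0, hl, hseq⟩ := ih
    rename_i C B'
    refine ⟨ℓ + 1, fun t => if ht : (t : ℕ) ≤ ℓ then seq ⟨t, by omega⟩ else B', ?_, ?_, ?_⟩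
    · simp only [Fin.val_zero, Nat.zero_le, dif_pos]
      rw [← h0]; congr 1
    · simp [Fin.val_last]
    · intro t
      by_cases ht : (t : ℕ) < ℓ
      · have key := hseq ⟨t, ht⟩
        have e1 : (t.castSucc : ℕ) ≤ ℓ := by simp; omega
        have e2 : (t.succ : ℕ) ≤ ℓ := by simp; omega
        simp only [dif_pos e1, dif_pos e2]
        have c1 : (⟨(t.castSucc : ℕ), by omega⟩ : Fin (ℓ+1)) = (⟨t, ht⟩ : Fin ℓ).castSucc := by
          simp [Fin.ext_iff]
        have c2 : (⟨(t.succ : ℕ), by omega⟩ : Fin (ℓ+1)) = (⟨t, ht⟩ : Fin ℓ).succ := by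
          simp [Fin.ext_iff]
        rw [c1, c2]; exact key
      · have htl : (t : ℕ) = ℓ := by omega
        have e1 : (t.castSucc : ℕ) ≤ ℓ := by simp [htl]
        have e2 : ¬ (t.succ : ℕ) ≤ ℓ := by simp [htl]
        simp only [dif_pos e1, dif_neg e2]
        have c1 : (⟨(t.castSucc : ℕ), by omega⟩ : Fin (ℓ+1)) = Fin.last ℓ := by
          simp [Fin.ext_iff, htl]
        rw [c1, hl]; exact hstep


lemma rtg_pair {M : Matroid α} {p q : Set α × Set α}
    (h : Relation.ReflTransGen (Step M) p q) :
    Relation.ReflTransGen (ExchStep M (n := 2)) ![p.1, p.2] ![q.1, q.2] := by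
  induction h with
  | refl => exact Relation.ReflTransGen.refl
  | tail _ hstep ih => exact ih.tail (step_exchStep hstep)



lemma ncard_fin2_setOf (P : Fin 2 → Prop) [Decidable (P 0)] [Decidable (P 1)] :
    ({i | P i} : Set (Fin 2)).ncard =
      (if P 0 then 1 else 0) + (if P 1 then 1 else 0) := by
  by_cases h0 : P 0 <;> by_cases h1 : P 1
  · have h : ({i | P i} : Set (Fin 2)) = {0, 1} := by
      ext i; fin_cases i <;> simp [h0, h1]
    rw [h, ncard_pair (by decide), if_pos h0, if_pos h1]
  · have h : ({i | P i} : Set (Fin 2)) = {0} := by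
      ext i; fin_cases i <;> simp [h0, h1]
    rw [h, ncard_singleton, if_pos h0, if_neg h1]
  · have h : ({i | P i} : Set (Fin 2)) = {1} := by
      ext i; fin_cases i <;> simp [h0, h1]
    rw [h, ncard_singleton, if_neg h0, if_pos h1]
  · have h : ({i | P i} : Set (Fin 2)) = ∅ := by
      ext i; fin_cases i <;> simp [h0, h1]
    rw [h, ncard_empty, if_neg h0, if_neg h1]


lemma sameUnion_inter_union {B B' : Fin 2 → Set α} (h : SameUnion B B') :
    B 0 ∩ B 1 = B' 0 ∩ B' 1 ∧ B 0 ∪ B 1 = B' 0 ∪ B' 1 := by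
  classical
  have key : ∀ e : α, ((e ∈ B 0 ∧ e ∈ B 1) ↔ (e ∈ B' 0 ∧ e ∈ B' 1)) ∧
      ((e ∈ B 0 ∨ e ∈ B 1) ↔ (e ∈ B' 0 ∨ e ∈ B' 1)) := by
    intro e
    have he := h e
    have e1 : Nat.card {i : Fin 2 // e ∈ B i} = ({i | e ∈ B i} : Set (Fin 2)).ncard :=
      Nat.card_coe_set_eq _
    have e2 : Nat.card {i : Fin 2 // e ∈ B' i} = ({i | e ∈ B' i} : Set (Fin 2)).ncard :=
      Nat.card_coe_set_eq _
    rw [e1, e2, ncard_fin2_setOf, ncard_fin2_setOf] at he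
    by_cases h0 : e ∈ B 0 <;> by_cases h1 : e ∈ B 1 <;>
      by_cases h2 : e ∈ B' 0 <;> by_cases h3 : e ∈ B' 1 <;>
      simp [h0, h1, h2, h3] at he ⊢
  constructor
  · ext e; simpa using (key e).1
  · ext e; simpa using (key e).2


lemma diff_facts {X Y X' Y' : Set α} (hI : X ∩ Y = X' ∩ Y') (hU : X ∪ Y = X' ∪ Y') :
    X \ X' = Y' \ Y ∧ X' \ X = Y \ Y' := by
  have hI' := Set.ext_iff.mp hI
  have hU' := Set.ext_iff.mp hU
  constructor <;> ext e <;>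
    (have h1 := hI' e; have h2 := hU' e;
     simp only [mem_inter_iff, mem_union] at h1 h2;
     simp only [mem_diff]; tauto)



lemma reconstruct {s t : Set α} : t = s \ (s \ t) ∪ (t \ s) := by
  ext e; simp only [mem_union, mem_diff]; tauto


lemma badconfig {M : Matroid α} (hfin : M.E.Finite) (hpav : IsPavingP M)
    {X Y X' Y' : Set α} {a₁ a₂ b₁ b₂ : α}
    (hX : M.IsBase X) (hY : M.IsBase Y) (hX' : M.IsBase X') (hY' : M.IsBase Y')
    (hI : X ∩ Y = X' ∩ Y') (hU : X ∪ Y = X' ∪ Y')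
    (hA : X \ X' = {a₁, a₂}) (hB : X' \ X = {b₁, b₂})
    (hab : a₁ ≠ a₂) (hbb : b₁ ≠ b₂)
    (d1 : ¬ M.IsBase (X \ {a₁} ∪ {b₁})) (d2 : ¬ M.IsBase (X \ {a₂} ∪ {b₂}))
    (d3 : ¬ M.IsBase (Y \ {b₁} ∪ {a₂})) (d4 : ¬ M.IsBase (Y \ {b₂} ∪ {a₁})) :
    Relation.ReflTransGen (Step M) (X, Y) (X', Y') := by
  obtain ⟨hD1, hD2⟩ := diff_facts hI hU
  have hYd : Y \ Y' = {b₁, b₂} := hD2.symm.trans hB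
  have hY'd : Y' \ Y = {a₁, a₂} := hD1.symm.trans hA
  -- membership facts
  have ha₁A : a₁ ∈ X \ X' := by rw [hA]; exact Or.inl rfl
  have ha₂A : a₂ ∈ X \ X' := by rw [hA]; exact Or.inr rfl
  have hb₁B : b₁ ∈ X' \ X := by rw [hB]; exact Or.inl rfl
  have hb₂B : b₂ ∈ X' \ X := by rw [hB]; exact Or.inr rfl
  have ha₁Y' : a₁ ∈ Y' \ Y := by rw [hY'd]; exact Or.inl rfl
  have ha₂Y' : a₂ ∈ Y' \ Y := by rw [hY'd]; exact Or.inr rfl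
  have hb₁Yd : b₁ ∈ Y \ Y' := by rw [hYd]; exact Or.inl rfl
  have hb₂Yd : b₂ ∈ Y \ Y' := by rw [hYd]; exact Or.inr rfl
  have ha₁X : a₁ ∈ X := ha₁A.1
  have ha₂X : a₂ ∈ X := ha₂A.1
  have ha₁X' : a₁ ∉ X' := ha₁A.2
  have ha₂X' : a₂ ∉ X' := ha₂A.2
  have ha₁Y : a₁ ∉ Y := ha₁Y'.2
  have ha₂Y : a₂ ∉ Y := ha₂Y'.2
  have ha₁Yp : a₁ ∈ Y' := ha₁Y'.1
  have ha₂Yp : a₂ ∈ Y' := ha₂Y'.1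
  have hb₁X' : b₁ ∈ X' := hb₁B.1
  have hb₂X' : b₂ ∈ X' := hb₂B.1
  have hb₁X : b₁ ∉ X := hb₁B.2
  have hb₂X : b₂ ∉ X := hb₂B.2
  have hb₁Y : b₁ ∈ Y := hb₁Yd.1
  have hb₂Y : b₂ ∈ Y := hb₂Yd.1
  have hb₁Y' : b₁ ∉ Y' := hb₁Yd.2
  have hb₂Y' : b₂ ∉ Y' := hb₂Yd.2
  have hXE := hX.subset_ground
  have hYE := hY.subset_ground
  have ha₁E : a₁ ∈ M.E := hXE ha₁X
  have ha₂E : a₂ ∈ M.E := hXE ha₂X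
  have hb₁E : b₁ ∈ M.E := hYE hb₁Y
  have hb₂E : b₂ ∈ M.E := hYE hb₂Y
  have hfX : X.Finite := hfin.subset hXE
  have hfY : Y.Finite := hfin.subset hYE
  -- reconstruction identities
  have hX'id : X' = X \ {a₁, a₂} ∪ {b₁, b₂} := by rw [← hA, ← hB]; exact reconstruct
  have hY'id : Y' = Y \ {b₁, b₂} ∪ {a₁, a₂} := by rw [← hYd, ← hY'd]; exact reconstruct
  -- the basis W = Y \ {b₂} ∪ {a₂}
  have hW : M.IsBase (Y \ {b₂} ∪ {a₂}) :=
    base_exchange_unique hfin hpav hY hb₁Y hb₂Y hbb ha₂E ha₂Y d3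
  -- Step A : find q
  have hstepA : ∃ q, q ∈ Y ∧ q ∉ X ∧ q ≠ b₁ ∧ q ≠ b₂ ∧ M.IsBase (X \ {a₁} ∪ {q}) := by
    by_contra hcon
    push_neg at hcon
    have hind : M.Indep (X \ {a₁}) := hX.indep.subset diff_subset
    have hsubE : X \ {a₁} ⊆ M.E := diff_subset.trans hXE
    have hmemF : ∀ c, c ∈ M.E → c ∉ X → ¬ M.IsBase (X \ {a₁} ∪ {c}) →
        c ∈ M.closure (X \ {a₁}) := by
      intro c hcE hcX hnb
      have hdep := not_indep_of_not_base hfin hX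
        (union_subset hsubE (by simpa)) (ncard_swap hfX ha₁X hcX) hnb
      rw [hind.mem_closure_iff_of_notMem (fun h => hcX h.1)]
      rw [union_singleton] at hdep
      exact ⟨hdep, insert_subset hcE hsubE⟩
    have hclb₁ : b₁ ∈ M.closure (X \ {a₁}) := hmemF b₁ hb₁E hb₁X d1
    have hWsub : Y \ {b₂} ∪ {a₂} ⊆ M.closure (X \ {a₁}) := by
      intro e he
      rcases he with ⟨heY, heb₂⟩ | rfl
      · rw [mem_singleton_iff] at heb₂
        by_cases heX : e ∈ X
        · exact M.subset_closure _ hsubE ⟨heX, fun h => ha₁Y ((mem_singleton_iff.mp h) ▸ heY)⟩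
        · by_cases heb₁ : e = b₁
          · exact heb₁ ▸ hclb₁
          · exact hmemF e (hYE heY) heX (hcon e heY heX heb₁ heb₂)
      · exact M.subset_closure _ hsubE ⟨ha₂X, by simp [Ne.symm hab]⟩
    exact base_not_subset_closure_diff hfin hX ha₁X hW hWsub
  obtain ⟨q, hqY, hqX, hqb₁, hqb₂, hXq⟩ := hstepA
  have hqE : q ∈ M.E := hYE hqY
  have hqX' : q ∉ X' := by
    intro h
    have hmem : q ∈ X' \ X := ⟨h, hqX⟩
    rw [hB] at hmem
    rcases hmem with h' | h'
    · exact hqb₁ h'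
    · exact hqb₂ (mem_singleton_iff.mp h')
  have hqY' : q ∈ Y' := by
    by_contra h
    have hmem : q ∈ Y \ Y' := ⟨hqY, h⟩
    rw [hYd] at hmem
    rcases hmem with h' | h'
    · exact hqb₁ h'
    · exact hqb₂ (mem_singleton_iff.mp h')
  have hqa₁ : q ≠ a₁ := fun h => ha₁Y (h ▸ hqY)
  have hqa₂ : q ≠ a₂ := fun h => ha₂Y (h ▸ hqY)
  -- step 1
  have hY₁ : M.IsBase (Y \ {q} ∪ {a₁}) :=
    base_exchange_unique hfin hpav hY hb₂Y hqY (Ne.symm hqb₂) ha₁E ha₁Y d4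
  have step1 : Step M (X, Y) (X \ {a₁} ∪ {q}, Y \ {q} ∪ {a₁}) :=
    ⟨a₁, q, ⟨ha₁X, ha₁Y⟩, ⟨hqY, hqX⟩, rfl, rfl, hXq, hY₁⟩
  -- memberships in X₁, Y₁
  have hqX₁ : q ∈ X \ {a₁} ∪ {q} := Or.inr rfl
  have ha₂X₁ : a₂ ∈ X \ {a₁} ∪ {q} := Or.inl ⟨ha₂X, by simp [Ne.symm hab]⟩
  have hb₁X₁ : b₁ ∉ X \ {a₁} ∪ {q} := by
    rintro (⟨h, _⟩ | h); exact hb₁X h; exact hqb₁ (mem_singleton_iff.mp h).symm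
  have hb₂X₁ : b₂ ∉ X \ {a₁} ∪ {q} := by
    rintro (⟨h, _⟩ | h); exact hb₂X h; exact hqb₂ (mem_singleton_iff.mp h).symm
  have hb₁Y₁ : b₁ ∈ Y \ {q} ∪ {a₁} := Or.inl ⟨hb₁Y, by simp [Ne.symm hqb₁]⟩
  have hb₂Y₁ : b₂ ∈ Y \ {q} ∪ {a₁} := Or.inl ⟨hb₂Y, by simp [Ne.symm hqb₂]⟩
  have ha₂Y₁ : a₂ ∉ Y \ {q} ∪ {a₁} := by
    rintro (⟨h, _⟩ | h); exact ha₂Y h; exact hab (mem_singleton_iff.mp h).symm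
  have hqY₁ : q ∉ Y \ {q} ∪ {a₁} := by
    rintro (⟨_, h⟩ | h); exact h rfl; exact hqa₁ (mem_singleton_iff.mp h)
  -- step 2 : base of X₂
  have hX₂ : M.IsBase ((X \ {a₁} ∪ {q}) \ {a₂} ∪ {b₁}) := by
    have hid : (X \ {a₁} ∪ {q}) \ {q} = X \ {a₁} := by
      rw [union_singleton, insert_diff_self_of_notMem (fun h => hqX h.1)]
    apply base_exchange_unique hfin hpav hXq hqX₁ ha₂X₁ hqa₂ hb₁E hb₁X₁
    rw [hid]
    exact d1
  -- step 2 : base of Y₂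
  have hY₂ : M.IsBase ((Y \ {q} ∪ {a₁}) \ {b₁} ∪ {a₂}) := by
    have ha₁Ymem : a₁ ∈ Y' := ha₁Yp
    have hb₂Y'n : b₂ ∉ Y' := hb₂Y'
    have hid1 : Y' \ {a₁} ∪ {b₂} = Y \ {b₁} ∪ {a₂} := by
      rw [hY'id]
      ext e
      simp only [mem_union, mem_diff, mem_insert_iff, mem_singleton_iff]
      constructor
      · rintro (⟨⟨heY, hnb⟩ | (rfl | rfl), hna₁⟩ | rfl)
        · push_neg at hnb
          exact Or.inl ⟨heY, hnb.1⟩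
        · exact absurd rfl hna₁
        · exact Or.inr rfl
        · exact Or.inl ⟨hb₂Y, Ne.symm hbb⟩
      · rintro (⟨heY, hnb₁⟩ | rfl)
        · by_cases hb2 : e = b₂
          · exact Or.inr hb2
          · exact Or.inl ⟨Or.inl ⟨heY, by simp [hnb₁, hb2]⟩, fun h => ha₁Y (h ▸ heY)⟩
        · exact Or.inl ⟨Or.inr (Or.inr rfl), Ne.symm hab⟩
    have d3' : ¬ M.IsBase (Y' \ {a₁} ∪ {b₂}) := by rw [hid1]; exact d3
    have hbase := base_exchange_unique hfin hpav hY' ha₁Ymem hqY'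
      (Ne.symm hqa₁) hb₂E hb₂Y'n d3'
    have hid2 : Y' \ {q} ∪ {b₂} = (Y \ {q} ∪ {a₁}) \ {b₁} ∪ {a₂} := by
      rw [hY'id]
      ext e
      simp only [mem_union, mem_diff, mem_insert_iff, mem_singleton_iff]
      constructor
      · rintro (⟨⟨heY, hnb⟩ | (rfl | rfl), hnq⟩ | rfl)
        · push_neg at hnb
          exact Or.inl ⟨Or.inl ⟨heY, hnq⟩, hnb.1⟩
        · exact Or.inl ⟨Or.inr rfl, fun h => hb₁X (h ▸ ha₁X)⟩
        · exact Or.inr rfl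
        · exact Or.inl ⟨Or.inl ⟨hb₂Y, Ne.symm hqb₂⟩, Ne.symm hbb⟩
      · rintro (⟨⟨heY, hnq⟩ | rfl, hnb₁⟩ | rfl)
        · by_cases hb2 : e = b₂
          · exact Or.inr hb2
          · exact Or.inl ⟨Or.inl ⟨heY, by simp [hnb₁, hb2]⟩, hnq⟩
        · exact Or.inl ⟨Or.inr (Or.inl rfl), Ne.symm hqa₁⟩
        · exact Or.inl ⟨Or.inr (Or.inr rfl), Ne.symm hqa₂⟩
    rw [← hid2]
    exact hbase
  have step2 : Step M (X \ {a₁} ∪ {q}, Y \ {q} ∪ {a₁})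
      ((X \ {a₁} ∪ {q}) \ {a₂} ∪ {b₁}, (Y \ {q} ∪ {a₁}) \ {b₁} ∪ {a₂}) :=
    ⟨a₂, b₁, ⟨ha₂X₁, ha₂Y₁⟩, ⟨hb₁Y₁, hb₁X₁⟩, rfl, rfl, hX₂, hY₂⟩
  -- step 3
  have hqX₂ : q ∈ (X \ {a₁} ∪ {q}) \ {a₂} ∪ {b₁} := Or.inl ⟨hqX₁, by simp [hqa₂]⟩
  have hqY₂ : q ∉ (Y \ {q} ∪ {a₁}) \ {b₁} ∪ {a₂} := by
    rintro (⟨h, _⟩ | h); exact hqY₁ h; exact hqa₂ (mem_singleton_iff.mp h)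
  have hb₂Y₂ : b₂ ∈ (Y \ {q} ∪ {a₁}) \ {b₁} ∪ {a₂} :=
    Or.inl ⟨hb₂Y₁, by simp [Ne.symm hbb]⟩
  have hb₂X₂ : b₂ ∉ (X \ {a₁} ∪ {q}) \ {a₂} ∪ {b₁} := by
    rintro (⟨h, _⟩ | h); exact hb₂X₁ h; exact hbb (mem_singleton_iff.mp h).symm
  have hX'step : X' = ((X \ {a₁} ∪ {q}) \ {a₂} ∪ {b₁}) \ {q} ∪ {b₂} := by
    rw [hX'id]
    ext e
    simp only [mem_union, mem_diff, mem_insert_iff, mem_singleton_iff]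
    constructor
    · rintro (⟨heX, hna⟩ | (rfl | rfl))
      · push_neg at hna
        exact Or.inl ⟨Or.inl ⟨Or.inl ⟨heX, hna.1⟩, hna.2⟩, fun h => hqX (h ▸ heX)⟩
      · exact Or.inl ⟨Or.inr rfl, Ne.symm hqb₁⟩
      · exact Or.inr rfl
    · rintro (⟨⟨⟨heX, hna₁⟩ | rfl, hna₂⟩ | rfl, hnq⟩ | rfl)
      · exact Or.inl ⟨heX, not_or.mpr ⟨hna₁, hna₂⟩⟩
      · exact absurd rfl hnq
      · exact Or.inr (Or.inl rfl)
      · exact Or.inr (Or.inr rfl)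
  have hY'step : Y' = ((Y \ {q} ∪ {a₁}) \ {b₁} ∪ {a₂}) \ {b₂} ∪ {q} := by
    rw [hY'id]
    ext e
    simp only [mem_union, mem_diff, mem_insert_iff, mem_singleton_iff]
    constructor
    · rintro (⟨heY, hnb⟩ | (rfl | rfl))
      · push_neg at hnb
        by_cases hq : e = q
        · exact Or.inr hq
        · exact Or.inl ⟨Or.inl ⟨Or.inl ⟨heY, hq⟩, hnb.1⟩, hnb.2⟩
      · exact Or.inl ⟨Or.inl ⟨Or.inr rfl, fun h => hb₁X (h ▸ ha₁X)⟩,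
          fun h => hb₂X (h ▸ ha₁X)⟩
      · exact Or.inl ⟨Or.inr rfl, fun h => hb₂X (h ▸ ha₂X)⟩
    · rintro (⟨⟨⟨heY, _⟩ | rfl, hnb₁⟩ | rfl, hnb₂⟩ | rfl)
      · exact Or.inl ⟨heY, not_or.mpr ⟨hnb₁, hnb₂⟩⟩
      · exact Or.inr (Or.inl rfl)
      · exact Or.inr (Or.inr rfl)
      · exact Or.inl ⟨hqY, not_or.mpr ⟨hqb₁, hqb₂⟩⟩
  have step3 : Step M ((X \ {a₁} ∪ {q}) \ {a₂} ∪ {b₁}, (Y \ {q} ∪ {a₁}) \ {b₁} ∪ {a₂})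
      (X', Y') :=
    ⟨q, b₂, ⟨hqX₂, hqY₂⟩, ⟨hb₂Y₂, hb₂X₂⟩, hX'step, hY'step, hX', hY'⟩
  exact Relation.ReflTransGen.head step1
    (Relation.ReflTransGen.head step2 (Relation.ReflTransGen.single step3))



lemma pair_connected {M : Matroid α} (hfin : M.E.Finite) (hpav : IsPavingP M) :
    ∀ k (X Y X' Y' : Set α), (X \ X').ncard = k → M.IsBase X → M.IsBase Y → M.IsBase X' →
      M.IsBase Y' → X ∩ Y = X' ∩ Y' → X ∪ Y = X' ∪ Y' →
      Relation.ReflTransGen (Step M) (X, Y) (X', Y') := by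
  intro k
  induction k using Nat.strong_induction_on with
  | _ k IH =>
  intro X Y X' Y' hk hX hY hX' hY' hI hU
  obtain ⟨hD1, hD2⟩ := diff_facts hI hU
  have hXE := hX.subset_ground
  have hYE := hY.subset_ground
  have hX'E := hX'.subset_ground
  have hfX := hfin.subset hXE
  have hfY := hfin.subset hYE
  have hfA : (X \ X').Finite := hfX.diff
  have hfB : (X' \ X).Finite := (hfin.subset hX'E).diff
  have hmemA : ∀ a ∈ X \ X', a ∈ X ∧ a ∉ X' ∧ a ∉ Y ∧ a ∈ Y' := by
    intro a ha
    have h2 : a ∈ Y' \ Y := hD1 ▸ ha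
    exact ⟨ha.1, ha.2, h2.2, h2.1⟩
  have hmemB : ∀ b ∈ X' \ X, b ∈ X' ∧ b ∉ X ∧ b ∈ Y ∧ b ∉ Y' := by
    intro b hb
    have h2 : b ∈ Y \ Y' := hD2 ▸ hb
    exact ⟨hb.1, hb.2, h2.1, h2.2⟩
  by_cases hXX : X = X'
  · have hYY : Y = Y' := by
      ext e
      have h1 := Set.ext_iff.mp hI e
      have h2 := Set.ext_iff.mp hU e
      rw [hXX] at h1 h2
      simp only [mem_inter_iff, mem_union] at h1 h2
      tauto
    rw [hXX, hYY]
  · have hAne : (X \ X').Nonempty := by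
      rw [Set.nonempty_iff_ne_empty]
      intro h
      exact hXX (hX.eq_of_subset_isBase hX' (diff_eq_empty.mp h))
    have hkpos : 0 < k := by rw [← hk]; exact (ncard_pos hfA).mpr hAne
    have hcardB : (X' \ X).ncard = k := by rw [← hk]; exact hX'.ncard_diff_comm hX
    by_cases hdir : ∃ a ∈ X \ X', ∃ b ∈ X' \ X,
        M.IsBase (X \ {a} ∪ {b}) ∧ M.IsBase (Y \ {b} ∪ {a})
    · obtain ⟨a, ha, b, hb, hXa, hYb⟩ := hdir
      obtain ⟨haX, haX', haY, haY'⟩ := hmemA a ha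
      obtain ⟨hbX', hbX, hbY, hbY'⟩ := hmemB b hb
      have hne : a ≠ b := fun h => hbX (h ▸ haX)
      have step : Step M (X, Y) (X \ {a} ∪ {b}, Y \ {b} ∪ {a}) :=
        ⟨a, b, ⟨haX, haY⟩, ⟨hbY, hbX⟩, rfl, rfl, hXa, hYb⟩
      have hIn : (X \ {a} ∪ {b}) ∩ (Y \ {b} ∪ {a}) = X' ∩ Y' := by
        rw [← hI]
        ext e
        simp only [mem_inter_iff, mem_union, mem_diff, mem_singleton_iff]
        by_cases hea : e = a
        · subst hea; simp [hne, haY, haX]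
        · by_cases heb : e = b
          · subst heb; simp [hea, hbX, hbY]
          · simp [hea, heb]
      have hUn : (X \ {a} ∪ {b}) ∪ (Y \ {b} ∪ {a}) = X' ∪ Y' := by
        rw [← hU]
        ext e
        simp only [mem_union, mem_diff, mem_singleton_iff]
        by_cases hea : e = a
        · subst hea; simp [hne, haX]
        · by_cases heb : e = b
          · subst heb; simp [hea, hbY]
          · simp [hea, heb]
      have hkd : ((X \ {a} ∪ {b}) \ X').ncard = k - 1 := by
        have hseteq : (X \ {a} ∪ {b}) \ X' = (X \ X') \ {a} := by
          ext e
          simp only [mem_diff, mem_union, mem_singleton_iff]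
          constructor
          · rintro ⟨⟨he, hna⟩ | rfl, hX'e⟩
            · exact ⟨⟨he, hX'e⟩, hna⟩
            · exact absurd hbX' hX'e
          · rintro ⟨⟨he, hX'e⟩, hna⟩
            exact ⟨Or.inl ⟨he, hna⟩, hX'e⟩
        rw [hseteq]
        have h5 := ncard_diff_singleton_add_one ha hfA
        omega
      exact Relation.ReflTransGen.head step
        (IH (k-1) (by omega) _ _ _ _ hkd hXa hYb hX' hY' hIn hUn)
    · push_neg at hdir
      have hfail : ∀ a ∈ X \ X', ∀ b ∈ X' \ X,
          M.IsBase (X \ {a} ∪ {b}) → ¬ M.IsBase (Y \ {b} ∪ {a}) := hdir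
      by_cases hk1 : k = 1
      · exfalso
        obtain ⟨a, hAa⟩ := ncard_eq_one.mp (by rw [hk, hk1])
        obtain ⟨b, hBb⟩ := ncard_eq_one.mp (by rw [hcardB, hk1])
        have ha : a ∈ X \ X' := by rw [hAa]; rfl
        have hb : b ∈ X' \ X := by rw [hBb]; rfl
        have hX'eq : X' = X \ {a} ∪ {b} := by
          have h := reconstruct (s := X) (t := X')
          rwa [hAa, hBb] at h
        have hY'eq : Y' = Y \ {b} ∪ {a} := by
          have h := reconstruct (s := Y) (t := Y')
          have e1 : Y \ Y' = {b} := by rw [← hD2, hBb]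
          have e2 : Y' \ Y = {a} := by rw [← hD1, hAa]
          rwa [e1, e2] at h
        exact hfail a ha b hb (hX'eq ▸ hX') (hY'eq ▸ hY')
      · -- k ≥ 2 ; first show k = 2 by a counting argument
        have hk2 : k = 2 := by
          by_contra hne2
          obtain ⟨a₁, ha₁, a₂, ha₂, ha12⟩ := (one_lt_ncard hfA).mp (by omega)
          set T : α → Set α := fun a => {b | b ∈ X' \ X ∧ ¬ M.IsBase (X \ {a} ∪ {b})} with hT
          have hTsub : ∀ a, T a ⊆ X' \ X := fun a b hb => hb.1
          have hfT : ∀ a, (T a).Finite := fun a => hfB.subset (hTsub a)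
          have hTbig : ∀ a ∈ X \ X', k ≤ (T a).ncard + 1 := by
            intro a ha
            obtain ⟨haX, haX', haY, haY'⟩ := hmemA a ha
            have haE : a ∈ M.E := hXE haX
            have hle1 : ((X' \ X) \ T a).ncard ≤ 1 := by
              rw [ncard_le_one hfB.diff]
              intro b hb b' hb'
              by_contra hne
              have hBb : M.IsBase (X \ {a} ∪ {b}) := by
                by_contra h
                exact hb.2 ⟨hb.1, h⟩
              have hBb' : M.IsBase (X \ {a} ∪ {b'}) := by
                by_contra h
                exact hb'.2 ⟨hb'.1, h⟩
              have hd := hfail a ha b hb.1 hBb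
              have hd' := hfail a ha b' hb'.1 hBb'
              obtain ⟨_, _, hbY, _⟩ := hmemB b hb.1
              obtain ⟨_, _, hb'Y, _⟩ := hmemB b' hb'.1
              exact hd' (base_exchange_unique hfin hpav hY hbY hb'Y hne haE haY hd)
            have hdc : ((X' \ X) \ T a).ncard = k - (T a).ncard := by
              rw [ncard_diff (hTsub a) (hfT a), hcardB]
            have hTle : (T a).ncard ≤ k := by
              rw [← hcardB]
              exact ncard_le_ncard (hTsub a) hfB
            omega
          have hdisj : Disjoint (T a₁) (T a₂) := by
            rw [Set.disjoint_left]
            intro b hb1 hb2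
            obtain ⟨hbB, hd1⟩ := hb1
            obtain ⟨_, hd2⟩ := hb2
            obtain ⟨_, hbX, hbY, _⟩ := hmemB b hbB
            have hbE : b ∈ M.E := hYE hbY
            have ha₁X := (hmemA a₁ ha₁).1
            have ha₂X := (hmemA a₂ ha₂).1
            exact hd2 (base_exchange_unique hfin hpav hX ha₁X ha₂X ha12 hbE hbX hd1)
          have hcup : (T a₁ ∪ T a₂).ncard ≤ k := by
            rw [← hcardB]
            exact ncard_le_ncard (union_subset (hTsub _) (hTsub _)) hfB
          rw [ncard_union_eq hdisj (hfT _) (hfT _)] at hcup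
          have h1 := hTbig a₁ ha₁
          have h2 := hTbig a₂ ha₂
          omega
        obtain ⟨a₁, a₂, hab, hA⟩ := ncard_eq_two.mp (by rw [hk, hk2])
        obtain ⟨b₁, b₂, hbb, hB⟩ := ncard_eq_two.mp (by rw [hcardB, hk2])
        have ha₁ : a₁ ∈ X \ X' := by rw [hA]; exact mem_insert _ _
        have ha₂ : a₂ ∈ X \ X' := by rw [hA]; exact mem_insert_of_mem _ rfl
        have hb₁ : b₁ ∈ X' \ X := by rw [hB]; exact mem_insert _ _
        have hb₂ : b₂ ∈ X' \ X := by rw [hB]; exact mem_insert_of_mem _ rfl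
        obtain ⟨ha₁X, ha₁X', ha₁Y, ha₁Y'⟩ := hmemA a₁ ha₁
        obtain ⟨ha₂X, ha₂X', ha₂Y, ha₂Y'⟩ := hmemA a₂ ha₂
        obtain ⟨hb₁X', hb₁X, hb₁Y, hb₁Y'⟩ := hmemB b₁ hb₁
        obtain ⟨hb₂X', hb₂X, hb₂Y, hb₂Y'⟩ := hmemB b₂ hb₂
        have ha₁E : a₁ ∈ M.E := hXE ha₁X
        have ha₂E : a₂ ∈ M.E := hXE ha₂X
        have hb₁E : b₁ ∈ M.E := hYE hb₁Y
        have hb₂E : b₂ ∈ M.E := hYE hb₂Y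
        by_cases hc : M.IsBase (Y \ {b₁} ∪ {a₁})
        · have p1 : ¬ M.IsBase (X \ {a₁} ∪ {b₁}) := by
            intro h
            exact hfail a₁ ha₁ b₁ hb₁ h hc
          have p2 : M.IsBase (X \ {a₂} ∪ {b₁}) :=
            base_exchange_unique hfin hpav hX ha₁X ha₂X hab hb₁E hb₁X p1
          have p3 : ¬ M.IsBase (Y \ {b₁} ∪ {a₂}) := hfail a₂ ha₂ b₁ hb₁ p2
          have p4 : M.IsBase (Y \ {b₂} ∪ {a₂}) :=
            base_exchange_unique hfin hpav hY hb₁Y hb₂Y hbb ha₂E ha₂Y p3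
          have p5 : ¬ M.IsBase (X \ {a₂} ∪ {b₂}) := by
            intro h
            exact hfail a₂ ha₂ b₂ hb₂ h p4
          have p6 : M.IsBase (X \ {a₁} ∪ {b₂}) :=
            base_exchange_unique hfin hpav hX ha₂X ha₁X (Ne.symm hab) hb₂E hb₂X p5
          have p7 : ¬ M.IsBase (Y \ {b₂} ∪ {a₁}) := hfail a₁ ha₁ b₂ hb₂ p6
          exact badconfig hfin hpav hX hY hX' hY' hI hU hA hB hab hbb p1 p5 p3 p7
        · have p1 : ¬ M.IsBase (Y \ {b₁} ∪ {a₁}) := hc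
          have p2 : M.IsBase (Y \ {b₂} ∪ {a₁}) :=
            base_exchange_unique hfin hpav hY hb₁Y hb₂Y hbb ha₁E ha₁Y p1
          have p3 : ¬ M.IsBase (X \ {a₁} ∪ {b₂}) := by
            intro h
            exact hfail a₁ ha₁ b₂ hb₂ h p2
          have p4 : M.IsBase (X \ {a₂} ∪ {b₂}) :=
            base_exchange_unique hfin hpav hX ha₁X ha₂X hab hb₂E hb₂X p3
          have p5 : ¬ M.IsBase (Y \ {b₂} ∪ {a₂}) := hfail a₂ ha₂ b₂ hb₂ p4
          have p6 : M.IsBase (Y \ {b₁} ∪ {a₂}) :=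
            base_exchange_unique hfin hpav hY hb₂Y hb₁Y (Ne.symm hbb) ha₂E ha₂Y p5
          have p7 : ¬ M.IsBase (X \ {a₂} ∪ {b₁}) := by
            intro h
            exact hfail a₂ ha₂ b₁ hb₁ h p6
          have hB' : X' \ X = {b₂, b₁} := hB.trans (Set.pair_comm b₁ b₂)
          exact badconfig hfin hpav hX hY hX' hY' hI hU hA hB' hab (Ne.symm hbb) p3 p7 p5 p1



end AuxWhite

/-- White's conjecture in degree 2 holds for paving matroids. -/
theorem white_deg2_paving (M : Matroid α) (hfin : M.E.Finite)
    (hpav : IsPavingP M) :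
    WhiteDeg M 2 := by
  intro B B' hB hB' hsu
  obtain ⟨hI, hU⟩ := sameUnion_inter_union hsu
  have hrtg := pair_connected hfin hpav ((B 0) \ (B' 0)).ncard (B 0) (B 1) (B' 0) (B' 1)
    rfl (hB 0) (hB 1) (hB' 0) (hB' 1) hI hU
  have h2 : Relation.ReflTransGen (ExchStep M) ![B 0, B 1] ![B' 0, B' 1] := rtg_pair hrtg
  have hBeq : ![B 0, B 1] = B := by
    funext i; fin_cases i <;> rfl
  have hB'eq : ![B' 0, B' 1] = B' := by
    funext i; fin_cases i <;> rfl
  rw [hBeq, hB'eq] at h2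
  exact rtg_exchConnected h2

end WhitePaving
end

section
/- Let M be a matroid of rank r on a finite ground set E with a stressed hyperplane H of size at least r, and let M̃ be the relaxation of M at H. Let X and X' be size-r subsets of H (i.e., of type 0), and let Y and Y' be bases of M with |Y \ H| ≥ 2 and |Y' \ H| ≥ 2, such that X' = (X \ {s}) ∪ {t} and Y' = (Y \ {t}) ∪ {s} for some s ∈ X \ Y, t ∈ Y \ X with s ≠ t. Then there exists an exchange sequence in M̃ from (X,Y) to (X',Y') of length ℓ > 1 such that every tuple in the sequence other than the first and the last consists entirely of bases of M. -/
open Set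

namespace WhitePaving

variable {α : Type*}

/-- Any subset of a stressed hyperplane of size less than `r` is independent. -/
private lemma indep_of_subset_small (M : Matroid α) (r : ℕ) (H : Set α)
    (hfin : M.E.Finite) (hH : IsStressedP M r H) (hHcard : r ≤ H.ncard)
    {S : Set α} (hS : S ⊆ H) (hcard : S.ncard < r) : M.Indep S := by
  have hHE : H ⊆ M.E := hH.1.1.subset_ground
  have hHfin : H.Finite := hfin.subset hHE
  have hSfin : S.Finite := hHfin.subset hS
  obtain ⟨T, hST, hTH, hTcard⟩ := Set.exists_superset_subset_encard_eq
    (k := (r : ℕ∞)) hS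
    (by rw [← hSfin.cast_ncard_eq]; exact_mod_cast hcard.le)
    (by rw [← hHfin.cast_ncard_eq]; exact_mod_cast hHcard)
  have hTn : T.ncard = r := by rw [Set.ncard_def, hTcard]; simp
  have hcirc := hH.2 T hTH hTn
  have hTfin : T.Finite := hHfin.subset hTH
  obtain ⟨x, hxT, hxS⟩ := Set.exists_mem_notMem_of_ncard_lt_ncard
    (by rw [hTn]; exact hcard) hSfin
  exact (hcirc.2.2 x hxT).subset (subset_diff_singleton hST hxS)

/-- An independent set of full size `r` is a base. -/
private lemma base_of_indep_ncard_s7 (M : Matroid α) (r : ℕ) (hfin : M.E.Finite)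
    (hr : HasRank M r) {I : Set α} (hI : M.Indep I) (hIcard : I.ncard = r) :
    M.IsBase I := by
  obtain ⟨B, hB, hIB⟩ := hI.exists_isBase_superset
  have hBfin : B.Finite := hfin.subset hB.subset_ground
  have hIBeq : I = B := Set.eq_of_subset_of_ncard_le hIB
    (by rw [hr B hB, hIcard]) hBfin
  rwa [hIBeq]

/-- If `X, X'` are type-0 subsets (size-`r` subsets of the stressed hyperplane `H`)
and `Y, Y'` are bases of `M` of type at least 2 with `(X', Y')` obtained from `(X, Y)`
by a proper symmetric exchange in the relaxation `Mt`, then `(X, Y)` and `(X', Y')`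
are connected by an exchange sequence in `Mt` of length `ℓ > 1` all of whose
intermediate tuples consist of bases of `M`. -/
theorem exchange_through_bases_deg2 (M Mt : Matroid α) (r : ℕ) (H : Set α)
    (hfin : M.E.Finite) (hr : HasRank M r) (hH : IsStressedP M r H)
    (hHcard : r ≤ H.ncard) (hrel : IsRelaxation M Mt r H)
    (X X' Y Y' : Set α)
    (hXH : X ⊆ H) (hXcard : X.ncard = r) (hX'H : X' ⊆ H) (hX'card : X'.ncard = r)
    (hY : M.IsBase Y) (hY' : M.IsBase Y')
    (hYty : 2 ≤ (Y \ H).ncard) (hY'ty : 2 ≤ (Y' \ H).ncard)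
    (s t : α) (hs : s ∈ X \ Y) (ht : t ∈ Y \ X) (hst : s ≠ t)
    (hX'eq : X' = (X \ {s}) ∪ {t}) (hY'eq : Y' = (Y \ {t}) ∪ {s}) :
    ∃ (ℓ : ℕ) (seq : Fin (ℓ + 1) → Fin 2 → Set α),
      1 < ℓ ∧ seq 0 = ![X, Y] ∧ seq (Fin.last ℓ) = ![X', Y'] ∧ IsExchSeq Mt seq ∧
      ∀ u : Fin (ℓ + 1), u ≠ 0 → u ≠ Fin.last ℓ → ∀ i, M.IsBase (seq u i) := by
  classical
  have hHE : H ⊆ M.E := hH.1.1.subset_ground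
  have hHfin : H.Finite := hfin.subset hHE
  have hXfin : X.Finite := hHfin.subset hXH
  have hYE : Y ⊆ M.E := hY.subset_ground
  have hYfin : Y.Finite := hfin.subset hYE
  have hYn : Y.ncard = r := hr Y hY
  have hsX : s ∈ X := hs.1
  have hsY : s ∉ Y := hs.2
  have hsH : s ∈ H := hXH hsX
  have htY : t ∈ Y := ht.1
  have htX : t ∉ X := ht.2
  have htH : t ∈ H := hX'H (hX'eq ▸ Set.mem_union_right _ rfl)
  -- basic cardinality facts
  have hYsplit : (Y ∩ H).ncard + (Y \ H).ncard = r := by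
    rw [Set.ncard_inter_add_ncard_diff_eq_ncard Y H hYfin, hYn]
  have hYdle : (Y \ H).ncard ≤ r := by omega
  have hr2 : 2 ≤ r := le_trans hYty hYdle
  -- find `u ∈ Y \ H` such that `insert s (Y \ {u})` is a base of `M`
  have hJH : insert s (Y ∩ H) ⊆ H := Set.insert_subset hsH inter_subset_right
  have hJcard : (insert s (Y ∩ H)).ncard < r := by
    have h1 : (insert s (Y ∩ H)).ncard ≤ (Y ∩ H).ncard + 1 :=
      Set.ncard_insert_le _ _
    omega
  have hJindep : M.Indep (insert s (Y ∩ H)) :=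
    indep_of_subset_small M r H hfin hH hHcard hJH hJcard
  obtain ⟨B', hB', hJB', hB'sub⟩ := hJindep.exists_isBase_subset_union_isBase hY
  have hB'fin : B'.Finite := hfin.subset hB'.subset_ground
  have hB'n : B'.ncard = r := hr B' hB'
  have hsB' : s ∈ B' := hJB' (Set.mem_insert _ _)
  have hB'insY : B' ⊆ insert s Y := by
    refine hB'sub.trans ?_
    rw [Set.insert_union]
    exact Set.insert_subset_insert (Set.union_subset inter_subset_left le_rfl)
  have hB'split : B' = insert s (B' ∩ Y) := by
    apply Set.Subset.antisymm
    · intro x hx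
      rcases hB'insY hx with h | h
      · exact h ▸ Set.mem_insert _ _
      · exact Set.mem_insert_of_mem _ ⟨hx, h⟩
    · exact Set.insert_subset hsB' inter_subset_left
  have hB'Yn : (B' ∩ Y).ncard = r - 1 := by
    have h1 : B'.ncard = (B' ∩ Y).ncard + 1 := by
      nth_rewrite 1 [hB'split]
      rw [Set.ncard_insert_of_notMem (fun h => hsY h.2)
        (hB'fin.subset Set.inter_subset_left)]
    omega
  have hYBsplit : (Y ∩ B').ncard + (Y \ B').ncard = r := by
    rw [Set.ncard_inter_add_ncard_diff_eq_ncard Y B' hYfin, hYn]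
  have hYB1 : (Y \ B').ncard = 1 := by
    rw [Set.inter_comm, hB'Yn] at hYBsplit; omega
  obtain ⟨u, hu⟩ := Set.ncard_eq_one.mp hYB1
  have huY : u ∈ Y := by
    have : u ∈ Y \ B' := hu ▸ rfl; exact this.1
  have huB' : u ∉ B' := by
    have : u ∈ Y \ B' := hu ▸ rfl; exact this.2
  have huH : u ∉ H := fun h => huB' (hJB' (Set.mem_insert_of_mem _ ⟨huY, h⟩))
  have huX : u ∉ X := fun h => huH (hXH h)
  have hus : u ≠ s := fun h => huH (h ▸ hsH)
  have hut : u ≠ t := fun h => huH (h ▸ htH)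
  have hB'eq : B' = insert s (Y \ {u}) := by
    apply Set.Subset.antisymm
    · intro x hx
      rcases hB'insY hx with h | h
      · exact h ▸ Set.mem_insert _ _
      · refine Set.mem_insert_of_mem _ ⟨h, fun hxu => ?_⟩
        rw [Set.mem_singleton_iff] at hxu
        exact huB' (hxu ▸ hx)
    · refine Set.insert_subset hsB' ?_
      intro y hy
      by_contra hyB'
      have : y ∈ Y \ B' := ⟨hy.1, hyB'⟩
      rw [hu, Set.mem_singleton_iff] at this
      exact hy.2 (this ▸ rfl)
  -- the intermediate pair of bases
  set X₁ : Set α := insert u (X \ {s}) with hX₁def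
  set Y₁ : Set α := insert s (Y \ {u}) with hY₁def
  have hY₁base : M.IsBase Y₁ := hB'eq ▸ hB'
  have hXcirc := hH.2 X hXH hXcard
  have hXs : M.Indep (X \ {s}) := hXcirc.2.2 s hsX
  have hXsH : X \ {s} ⊆ H := (Set.diff_subset).trans hXH
  have huclo : u ∉ M.closure (X \ {s}) := by
    intro h
    exact huH ((hH.1.1.closure ▸ M.closure_subset_closure hXsH) h)
  have hX₁indep : M.Indep X₁ := by
    rw [hX₁def, hXs.insert_indep_iff_of_notMem (fun h => huX h.1)]
    exact ⟨hYE huY, huclo⟩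
  have hXsn : (X \ {s}).ncard + 1 = r := by
    rw [Set.ncard_diff_singleton_add_one hsX hXfin, hXcard]
  have hX₁n : X₁.ncard = r := by
    rw [hX₁def, Set.ncard_insert_of_notMem (fun h => huX h.1)
      (hXfin.subset Set.diff_subset)]
    omega
  have hX₁base : M.IsBase X₁ := base_of_indep_ncard_s7 M r hfin hr hX₁indep hX₁n
  -- Mt-bases
  have MtX : Mt.IsBase X := (hrel.2 X).mpr (Or.inr ⟨hXH, hXcard⟩)
  have MtY : Mt.IsBase Y := (hrel.2 Y).mpr (Or.inl hY)
  have MtX₁ : Mt.IsBase X₁ := (hrel.2 X₁).mpr (Or.inl hX₁base)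
  have MtY₁ : Mt.IsBase Y₁ := (hrel.2 Y₁).mpr (Or.inl hY₁base)
  have MtX' : Mt.IsBase X' := (hrel.2 X').mpr (Or.inr ⟨hX'H, hX'card⟩)
  have MtY' : Mt.IsBase Y' := (hrel.2 Y').mpr (Or.inl hY')
  -- key set identities
  have hstep1X : X₁ = (X \ {s}) ∪ {u} := by rw [Set.union_singleton]
  have hstep1Y : Y₁ = (Y \ {u}) ∪ {s} := by rw [Set.union_singleton]
  have hstep2X : X' = (X₁ \ {u}) ∪ {t} := by
    rw [hX₁def, Set.insert_diff_self_of_notMem (fun h => huX h.1), hX'eq]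
  have hstep2Y : Y' = (Y₁ \ {t}) ∪ {u} := by
    rw [hY'eq, hY₁def]
    ext x
    simp only [Set.mem_union, Set.mem_diff, Set.mem_insert_iff,
      Set.mem_singleton_iff]
    constructor
    · rintro (⟨hxY, hxt⟩ | rfl)
      · by_cases hxu : x = u
        · exact Or.inr hxu
        · exact Or.inl ⟨Or.inr ⟨hxY, hxu⟩, hxt⟩
      · exact Or.inl ⟨Or.inl rfl, hst⟩
    · rintro (⟨(rfl | ⟨hxY, _⟩), hxt⟩ | rfl)
      · exact Or.inr rfl
      · exact Or.inl ⟨hxY, hxt⟩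
      · exact Or.inl ⟨huY, hut⟩
  -- build the sequence
  refine ⟨2, ![![X, Y], ![X₁, Y₁], ![X', Y']], one_lt_two, rfl, ?_, ?_, ?_⟩
  · rfl
  · intro τ
    fin_cases τ
    · -- step from (X, Y) to (X₁, Y₁)
      refine ⟨0, 1, by decide, s, u, ?_, ?_, ?_, ?_, ?_, ?_, ?_⟩
      · exact ⟨hsX, hsY⟩
      · exact ⟨huY, huX⟩
      · exact hstep1X
      · exact hstep1Y
      · exact MtX₁
      · exact MtY₁
      · intro k h0 h1; fin_cases k
        · exact absurd rfl h0
        · exact absurd rfl h1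
    · -- step from (X₁, Y₁) to (X', Y')
      refine ⟨0, 1, by decide, u, t, ?_, ?_, ?_, ?_, ?_, ?_, ?_⟩
      · refine ⟨Set.mem_insert _ _, ?_⟩
        rw [hY₁def]
        rintro (h | h)
        · exact hus h
        · exact h.2 rfl
      · refine ⟨?_, ?_⟩
        · rw [hY₁def]
          exact Set.mem_insert_of_mem _ ⟨htY, fun h => hut h.symm⟩
        · rw [hX₁def]
          rintro (h | h)
          · exact hut h.symm
          · exact htX h.1
      · exact hstep2X
      · exact hstep2Y
      · exact MtX'
      · exact MtY'
      · intro k h0 h1; fin_cases k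
        · exact absurd rfl h0
        · exact absurd rfl h1
  · intro v h0 hl i
    fin_cases v
    · exact absurd rfl h0
    · fin_cases i
      · exact hX₁base
      · exact hY₁base
    · exact absurd rfl hl

end WhitePaving
end
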